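/- arXiv:2212.11460 — 5 statements merged into one kernel-verified Lean document; each statement's English description precedes it below -/
import Mathlib

section
/- For n ≥ 4, the largest adjacency eigenvalue of the signed graph Ġ^{1, n−3} equals (√(n² − 8) + n − 4)/2. -/
/-!
Apart from `-1`, every eigenvalue `ν` of `Ġ^{1,t}` is a root of `(ν² - 2)(ν² - (t - 1)ν - 2t)`,
the characteristic polynomial of the quotient matrix of the equitable partition
`{u}, {v}, {u₁}, {v₁, …, v_t}`: summing the rows of the `v_j` expresses the eigenvalue equations
through `x_u`, `x_v`, `x_{u₁}` and `∑ x_{v_j}` alone. For `t = n - 3` the positive root of the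
second factor is `(√(n² - 8) + n - 4)/2`; it exceeds `-1` and `±√2`, and `(0, t, t, μ, …, μ)` is an
eigenvector for it.
-/

/-- The sign matrix of the signed graph `Ġ^{s,t}` on `s + t + 2` vertices:
vertex `0 = u`, vertex `1 = v`, vertices `2, …, s+1` are `u₁, …, u_s`, and vertices
`s+2, …, s+t+1` are `v₁, …, v_t`. -/
def gstSign (s t : ℕ) (x y : Fin (s + t + 2)) : ℤ :=
  if x = y then 0
  else
    if min x.val y.val = 0 ∧ max x.val y.val = 1 then -1
    else if min x.val y.val = 0 then (if max x.val y.val < s + 2 then 1 else 0)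
    else if min x.val y.val = 1 then (if s + 2 ≤ max x.val y.val then 1 else 0)
    else 1

/-- The adjacency matrix of the signed graph `Ġ^{s,t}`, as a real matrix. -/
def gstMat (s t : ℕ) : Matrix (Fin (s + t + 2)) (Fin (s + t + 2)) ℝ :=
  Matrix.of fun x y => (gstSign s t x y : ℝ)

/-- The largest (real) eigenvalue `λ₁` of a real matrix. -/
noncomputable def lam1 {V : Type*} [Fintype V] (A : Matrix V V ℝ) : ℝ :=
  sSup {μ : ℝ | ∃ x : V → ℝ, x ≠ 0 ∧ A.mulVec x = μ • x}

open Finset Matrix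

lemma le_of_sq_eq_mul_add_of_nonneg {p r μ ν : ℝ} (hr : 0 < r) (hμ₀ : 0 ≤ μ)
    (hμ : μ ^ 2 = p * μ + r) (hν : ν ^ 2 = p * ν + r) : ν ≤ μ := by
  have hpμ : p < μ := by nlinarith
  by_contra! h
  nlinarith [mul_pos (sub_pos.2 h) (show 0 < ν + μ - p by linarith)]

section Rows

variable {s t : ℕ} (x : Fin (s + t + 2) → ℝ)

def uBlockSum : ℝ := ∑ i : Fin (s + t + 2) with 2 ≤ i.val ∧ i.val < s + 2, x i

def vBlockSum : ℝ := ∑ i : Fin (s + t + 2) with s + 2 ≤ i.val, x i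

lemma card_vBlock : #{i : Fin (s + t + 2) | s + 2 ≤ i.val} = t := by
  rw [card_filter, Fin.sum_univ_eq_sum_range (fun k => if s + 2 ≤ k then 1 else 0),
    show s + t + 2 = (s + 2) + t by ring, sum_range_add]
  simp

lemma gstMat_mulVec_u :
    (gstMat s t *ᵥ x) ⟨0, by omega⟩ = -x ⟨1, by omega⟩ + uBlockSum x := by
  have h (j : Fin (s + t + 2)) : gstMat s t ⟨0, by omega⟩ j * x j =
      (if j = ⟨1, by omega⟩ then -x j else 0) +
        (if 2 ≤ j.val ∧ j.val < s + 2 then x j else 0) := by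
    simp only [gstMat, of_apply, gstSign, Fin.ext_iff]
    split_ifs <;> first | omega | (push_cast; ring)
  simp only [mulVec, dotProduct, h, sum_add_distrib, sum_ite_eq', mem_univ, if_true, uBlockSum,
    sum_filter]

lemma gstMat_mulVec_v :
    (gstMat s t *ᵥ x) ⟨1, by omega⟩ = -x ⟨0, by omega⟩ + vBlockSum x := by
  have h (j : Fin (s + t + 2)) : gstMat s t ⟨1, by omega⟩ j * x j =
      (if j = ⟨0, by omega⟩ then -x j else 0) + (if s + 2 ≤ j.val then x j else 0) := by
    simp only [gstMat, of_apply, gstSign, Fin.ext_iff]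
    split_ifs <;> first | omega | (push_cast; ring)
  simp only [mulVec, dotProduct, h, sum_add_distrib, sum_ite_eq', mem_univ, if_true, vBlockSum,
    sum_filter]

lemma gstMat_mulVec_uBlock (i : Fin (s + t + 2)) (h2 : 2 ≤ i.val) (hs : i.val < s + 2) :
    (gstMat s t *ᵥ x) i = x ⟨0, by omega⟩ + (uBlockSum x + vBlockSum x - x i) := by
  have h (j : Fin (s + t + 2)) : gstMat s t i j * x j =
      (if j = ⟨0, by omega⟩ then x j else 0) +
        ((if 2 ≤ j.val ∧ j.val < s + 2 then x j else 0) +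
          (if s + 2 ≤ j.val then x j else 0) - (if j = i then x j else 0)) := by
    simp only [gstMat, of_apply, gstSign, Fin.ext_iff]
    split_ifs <;> first | omega | (push_cast; ring)
  simp only [mulVec, dotProduct, h, sum_add_distrib, sum_sub_distrib, sum_ite_eq', mem_univ,
    if_true, uBlockSum, vBlockSum, sum_filter]

lemma gstMat_mulVec_vBlock (i : Fin (s + t + 2)) (hs : s + 2 ≤ i.val) :
    (gstMat s t *ᵥ x) i = x ⟨1, by omega⟩ + (uBlockSum x + vBlockSum x - x i) := by
  have h (j : Fin (s + t + 2)) : gstMat s t i j * x j =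
      (if j = ⟨1, by omega⟩ then x j else 0) +
        ((if 2 ≤ j.val ∧ j.val < s + 2 then x j else 0) +
          (if s + 2 ≤ j.val then x j else 0) - (if j = i then x j else 0)) := by
    simp only [gstMat, of_apply, gstSign, Fin.ext_iff]
    split_ifs <;> first | omega | (push_cast; ring)
  simp only [mulVec, dotProduct, h, sum_add_distrib, sum_sub_distrib, sum_ite_eq', mem_univ,
    if_true, uBlockSum, vBlockSum, sum_filter]

lemma vBlockSum_eq_mul {d : ℝ} (h : ∀ i : Fin (s + t + 2), s + 2 ≤ i.val → x i = d) :
    vBlockSum x = t * d := by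
  rw [vBlockSum, sum_congr rfl fun i hi => h i (mem_filter.mp hi).2, sum_const, card_vBlock,
    nsmul_eq_mul]

end Rows

section One

variable {t : ℕ}

lemma uBlockSum_one (x : Fin (1 + t + 2) → ℝ) : uBlockSum x = x ⟨2, by omega⟩ := by
  rw [uBlockSum, sum_filter]
  have h (j : Fin (1 + t + 2)) : (if 2 ≤ j.val ∧ j.val < 1 + 2 then x j else 0) =
      if j = ⟨2, by omega⟩ then x j else 0 := by
    simp only [Fin.ext_iff]; split_ifs <;> first | rfl | omega
  simp only [h, sum_ite_eq', mem_univ, if_true]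

lemma Fin.eq_zero_or_one_or_two_or_three_le (i : Fin (1 + t + 2)) :
    i = ⟨0, by omega⟩ ∨ i = ⟨1, by omega⟩ ∨ i = ⟨2, by omega⟩ ∨ 3 ≤ i.val := by
  simp only [Fin.ext_iff]; omega

lemma gstMat_one_eigenvalue_cases {ν : ℝ} {x : Fin (1 + t + 2) → ℝ} (hx0 : x ≠ 0)
    (hx : gstMat 1 t *ᵥ x = ν • x) : ν = -1 ∨ ν ^ 2 = 2 ∨ ν ^ 2 = (t - 1) * ν + 2 * t := by
  set a := x ⟨0, by omega⟩
  set b := x ⟨1, by omega⟩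
  set c := x ⟨2, by omega⟩
  set W := vBlockSum x
  have eq (i : Fin (1 + t + 2)) : ν * x i = (gstMat 1 t *ᵥ x) i := by simp [hx]
  have eq_u : ν * a = -b + c := by rw [eq, gstMat_mulVec_u, uBlockSum_one]
  have eq_v : ν * b = -a + W := by rw [eq, gstMat_mulVec_v]
  have eq_u₁ : ν * c = a + W := by
    rw [eq, gstMat_mulVec_uBlock _ _ le_rfl (by simp), uBlockSum_one]; ring
  have eq_vBlock (i : Fin (1 + t + 2)) (hi : 3 ≤ i.val) : (ν + 1) * x i = b + c + W := by
    linear_combination eq i + (by rw [gstMat_mulVec_vBlock _ _ hi, uBlockSum_one] :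
      (gstMat 1 t *ᵥ x) i = b + (c + W - x i))
  have eq_W : ν * W = t * (b + c) + (t - 1) * W := by
    have : (ν + 1) * vBlockSum x = t * (b + c + W) := by
      rw [vBlockSum, mul_sum, sum_congr rfl fun i hi => eq_vBlock i (mem_filter.mp hi).2,
        sum_const, card_vBlock, nsmul_eq_mul]
    linear_combination this
  by_contra! hν
  obtain ⟨hν₁, hν₂, hνq⟩ := hν
  have ha : a = 0 := by
    refine (mul_eq_zero.mp ?_).resolve_left (sub_ne_zero.mpr hν₂)
    linear_combination ν * eq_u - eq_v + eq_u₁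
  have hW : W = 0 := by
    refine (mul_eq_zero.mp ?_).resolve_left (sub_ne_zero.mpr hνq)
    linear_combination ν * eq_W + t * eq_v + t * eq_u₁
  have hb : b = 0 := by
    refine (mul_eq_zero.mp ?_).resolve_left (sub_ne_zero.mpr hνq)
    linear_combination (ν - t + 1) * eq_v + eq_W - t * eq_u + (t * ν - ν + t - 1) * ha
  have hc : c = 0 := by linear_combination -eq_u + ν * ha + hb
  refine hx0 (funext fun i => ?_)
  obtain rfl | rfl | rfl | hi := Fin.eq_zero_or_one_or_two_or_three_le i
  · exact ha
  · exact hb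
  · exact hc
  · have := eq_vBlock i hi
    rw [hb, hc, hW, add_zero, add_zero, mul_eq_zero] at this
    exact this.resolve_left (by contrapose! hν₁; linarith)

lemma gstMat_one_exists_eigenvector (ht : 1 ≤ t) {μ : ℝ} (hμ : μ ^ 2 = (t - 1) * μ + 2 * t) :
    ∃ x : Fin (1 + t + 2) → ℝ, x ≠ 0 ∧ gstMat 1 t *ᵥ x = μ • x := by
  set x : Fin (1 + t + 2) → ℝ := fun i => if i.val = 0 then 0 else if i.val < 3 then t else μ
  have x_u : x ⟨0, by omega⟩ = 0 := rfl
  have x_v : x ⟨1, by omega⟩ = t := rfl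
  have x_u₁ : x ⟨2, by omega⟩ = t := rfl
  have x_vBlock (i : Fin (1 + t + 2)) (hi : 3 ≤ i.val) : x i = μ := by
    simp only [x]; rw [if_neg (by omega), if_neg (by omega)]
  have hW : vBlockSum x = t * μ := vBlockSum_eq_mul x x_vBlock
  refine ⟨x, fun h => ?_, funext fun i => ?_⟩
  · exact Nat.cast_ne_zero.mpr (by omega : t ≠ 0) (x_v.symm.trans (congrFun h _))
  rw [Pi.smul_apply, smul_eq_mul]
  obtain rfl | rfl | rfl | hi := Fin.eq_zero_or_one_or_two_or_three_le i
  · rw [gstMat_mulVec_u, uBlockSum_one, x_u, x_v, x_u₁]; ring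
  · rw [gstMat_mulVec_v, hW, x_u, x_v]; ring
  · rw [gstMat_mulVec_uBlock _ _ le_rfl (by simp), uBlockSum_one, hW, x_u, x_u₁]; ring
  · rw [gstMat_mulVec_vBlock _ _ hi, uBlockSum_one, hW, x_vBlock i hi, x_v, x_u₁]
    linear_combination -hμ

theorem lam1_gstMat_one (ht : 1 ≤ t) {μ : ℝ} (hμ₀ : 0 ≤ μ) (hμ : μ ^ 2 = (t - 1) * μ + 2 * t) :
    lam1 (gstMat 1 t) = μ := by
  refine IsGreatest.csSup_eq ⟨gstMat_one_exists_eigenvector ht hμ, ?_⟩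
  rintro ν ⟨x, hx0, hx⟩
  have ht' : (1 : ℝ) ≤ t := by exact_mod_cast ht
  rcases gstMat_one_eigenvalue_cases hx0 hx with rfl | hν | hν
  · linarith
  · nlinarith [mul_nonneg (sub_nonneg.2 ht') hμ₀]
  · exact le_of_sq_eq_mul_add_of_nonneg (by linarith) hμ₀ hμ hν

end One

theorem lam1_gst_one (n : ℕ) (hn : 4 ≤ n) :
    lam1 (gstMat 1 (n - 3)) = (Real.sqrt ((n : ℝ) ^ 2 - 8) + n - 4) / 2 := by
  have hn' : (4 : ℝ) ≤ n := by exact_mod_cast hn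
  have hsq := Real.sq_sqrt (show (0 : ℝ) ≤ n ^ 2 - 8 by nlinarith)
  refine lam1_gstMat_one (by omega) (by linarith [Real.sqrt_nonneg ((n : ℝ) ^ 2 - 8)]) ?_
  rw [Nat.cast_sub (by omega)]
  push_cast
  linear_combination hsq / 4
end

section
/- Let s, t be integers with 2 ≤ s ≤ t. Then λ₁(Ġ^{s−1, t+1}) > λ₁(Ġ^{s, t}), where λ₁ denotes the largest adjacency eigenvalue. Consequently, for n vertices (s + t = n − 2), λ₁(Ġ^{1, n−3}) > λ₁(Ġ^{2, n−4}) > … > λ₁(Ġ^{⌊(n−2)/2⌋, ⌈(n−2)/2⌉}). -/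
open Matrix Finset

section Eigenvalues

variable {K V : Type*} [Field K] [Fintype V]

def eigenvalueSet (A : Matrix V V K) : Set K := {μ | ∃ x, x ≠ 0 ∧ A *ᵥ x = μ • x}

theorem eigenvalueSet_finite (A : Matrix V V K) : (eigenvalueSet A).Finite :=
  (Module.End.finite_hasEigenvalue A.mulVecLin).subset fun _ ⟨_, hx0, hx⟩ =>
    Module.End.hasEigenvalue_of_hasEigenvector ⟨Module.End.mem_eigenspace_iff.mpr hx, hx0⟩

theorem mem_eigenvalueSet_iff_det [DecidableEq V] {A : Matrix V V K} {μ : K} :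
    μ ∈ eigenvalueSet A ↔ (μ • 1 - A).det = 0 := by
  rw [← exists_mulVec_eq_zero_iff]
  simp only [eigenvalueSet, Set.mem_ofPred_eq, sub_mulVec, smul_mulVec, one_mulVec,
    sub_eq_zero, eq_comm (a := μ • _)]

theorem le_lam1 {A : Matrix V V ℝ} {μ : ℝ} (h : μ ∈ eigenvalueSet A) : μ ≤ lam1 A :=
  le_csSup (eigenvalueSet_finite A).bddAbove h

theorem lam1_mem_eigenvalueSet {A : Matrix V V ℝ} (h : (eigenvalueSet A).Nonempty) :
    lam1 A ∈ eigenvalueSet A :=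
  h.csSup_mem (eigenvalueSet_finite A)

end Eigenvalues

section Blowup

variable {K V ι : Type*} [Field K] [Fintype V] [DecidableEq ι]

def fiberSum (c : V → ι) (x : V → K) (k : ι) : K := ∑ i with c i = k, x i

theorem fiberSum_comp (c : V → ι) (y : ι → K) (k : ι) :
    fiberSum c (y ∘ c) k = #{i | c i = k} * y k := by
  rw [fiberSum, sum_congr rfl fun i hi => by rw [Function.comp_apply, (mem_filter.mp hi).2],
    sum_const, nsmul_eq_mul]

variable [DecidableEq V] [Fintype ι]

def blowup (Q : Matrix ι ι K) (c : V → ι) : Matrix V V K :=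
  of fun i j => if i = j then 0 else Q (c i) (c j)

def blowupQuotient (Q : Matrix ι ι K) (c : V → ι) : Matrix ι ι K :=
  of fun k l => Q k l * #{i | c i = l} - if k = l then Q k k else 0

variable (Q : Matrix ι ι K) (c : V → ι)

theorem blowup_mulVec_apply (x : V → K) (i : V) :
    (blowup Q c *ᵥ x) i = (Q *ᵥ fiberSum c x) (c i) - Q (c i) (c i) * x i := by
  have hsplit : ∀ j, blowup Q c i j * x j =
      Q (c i) (c j) * x j - if i = j then Q (c i) (c j) * x j else 0 := by
    intro j
    by_cases h : i = j <;> simp [blowup, h]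
  simp only [mulVec, dotProduct, hsplit, sum_sub_distrib, sum_ite_eq, mem_univ, if_true,
    fiberSum, mul_sum]
  rw [← sum_fiberwise univ c fun j => Q (c i) (c j) * x j]
  refine congrArg (· - _) (sum_congr rfl fun k _ => sum_congr rfl fun j hj => ?_)
  rw [(mem_filter.mp hj).2]

theorem blowup_mulVec_comp (y : ι → K) :
    blowup Q c *ᵥ (y ∘ c) = (blowupQuotient Q c *ᵥ y) ∘ c := by
  ext i
  rw [blowup_mulVec_apply]
  simp only [Function.comp_apply, mulVec, dotProduct, fiberSum_comp,
    blowupQuotient, of_apply, sub_mul, sum_sub_distrib, ite_mul, zero_mul, sum_ite_eq,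
    mem_univ, if_true, mul_assoc]

theorem exists_comp_of_blowup_mulVec_eq_smul {x : V → K} {μ : K}
    (hμ : ∀ k, μ + Q k k ≠ 0) (hx : blowup Q c *ᵥ x = μ • x) :
    ∃ y : ι → K, x = y ∘ c := by
  refine ⟨fun k => (Q *ᵥ fiberSum c x) k / (μ + Q k k), funext fun i => ?_⟩
  have hi := congrFun hx i
  rw [blowup_mulVec_apply, Pi.smul_apply, smul_eq_mul] at hi
  rw [Function.comp_apply, eq_div_iff (hμ (c i))]
  linear_combination -hi

theorem mem_eigenvalueSet_blowup_iff (hc : c.Surjective) {μ : K} (hμ : ∀ k, μ + Q k k ≠ 0) :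
    μ ∈ eigenvalueSet (blowup Q c) ↔ μ ∈ eigenvalueSet (blowupQuotient Q c) := by
  constructor
  · rintro ⟨x, hx0, hx⟩
    obtain ⟨y, rfl⟩ := exists_comp_of_blowup_mulVec_eq_smul Q c hμ hx
    refine ⟨y, fun hy => hx0 (by rw [hy]; rfl), ?_⟩
    rw [blowup_mulVec_comp] at hx
    exact funext fun k => by obtain ⟨i, rfl⟩ := hc k; exact congrFun hx i
  · rintro ⟨y, hy0, hy⟩
    refine ⟨y ∘ c, fun h => hy0 (funext fun k => ?_), by rw [blowup_mulVec_comp, hy]; rfl⟩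
    obtain ⟨i, rfl⟩ := hc k
    exact congrFun h i

end Blowup

theorem card_filter_fin_val_mem_Ico {n a b : ℕ} (hb : b ≤ n) :
    #{i : Fin n | a ≤ i.val ∧ i.val < b} = b - a := by
  rw [← Nat.card_Ico, ← card_map Fin.valEmbedding]
  congr 1
  ext j
  simp only [mem_map, mem_filter, mem_univ, true_and, Fin.valEmbedding_apply, mem_Ico]
  exact ⟨fun ⟨_, hi, hij⟩ => hij ▸ hi, fun hj => ⟨⟨j, by omega⟩, hj, rfl⟩⟩

section Gst

def gstClass (s t : ℕ) (i : Fin (s + t + 2)) : Fin 4 :=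
  if i.val = 0 then 0 else if i.val = 1 then 1 else if i.val < s + 2 then 2 else 3

-- Signs between the parts `u, v, {uᵢ}, {vⱼ}`; a diagonal `1` makes that part a clique.
def gstPattern : Matrix (Fin 4) (Fin 4) ℝ :=
  !![0, -1, 1, 0; -1, 0, 0, 1; 1, 0, 1, 1; 0, 1, 1, 1]

variable (s t : ℕ)

theorem gstMat_eq_blowup : gstMat s t = blowup gstPattern (gstClass s t) := by
  ext i j
  have hi := i.isLt
  have hj := j.isLt
  simp only [gstMat, gstSign, blowup, gstClass, of_apply, Fin.ext_iff]
  split_ifs <;> simp [gstPattern] <;> omega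

theorem gstClass_surjective (hs : 1 ≤ s) (ht : 1 ≤ t) : (gstClass s t).Surjective := by
  intro k
  fin_cases k
  · exact ⟨⟨0, by omega⟩, by simp [gstClass]⟩
  · exact ⟨⟨1, by omega⟩, by simp [gstClass]⟩
  · exact ⟨⟨2, by omega⟩, by simp [gstClass]; omega⟩
  · exact ⟨⟨s + 2, by omega⟩, by simp [gstClass]⟩

theorem gstClass_eq_iff (j : Fin (s + t + 2)) (k : Fin 4) :
    gstClass s t j = k ↔ ![0, 1, 2, s + 2] k ≤ j.val ∧ j.val < ![1, 2, s + 2, s + t + 2] k := by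
  fin_cases k <;>
    simp only [Fin.zero_eta, Fin.mk_one, Fin.reduceFinMk, Fin.isValue, Matrix.cons_val] <;>
    unfold gstClass <;> split_ifs <;>
    simp only [Fin.reduceEq, true_iff, false_iff, not_and, not_lt] <;> omega

theorem card_gstClass_fiber (k : Fin 4) : #{i | gstClass s t i = k} = ![1, 1, s, t] k := by
  simp only [gstClass_eq_iff]
  rw [card_filter_fin_val_mem_Ico] <;> fin_cases k <;> simp

theorem blowupQuotient_gst :
    blowupQuotient gstPattern (gstClass s t) =
      !![0, -1, (s : ℝ), 0; -1, 0, 0, (t : ℝ); 1, 0, (s : ℝ) - 1, (t : ℝ);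
        0, 1, (s : ℝ), (t : ℝ) - 1] := by
  ext k l
  fin_cases k <;> fin_cases l <;> simp [blowupQuotient, gstPattern, card_gstClass_fiber]

end Gst

section Quartic

def gstQuartic (s t μ : ℝ) : ℝ :=
  (μ ^ 2 - (s - 1) * μ - 2 * s) * (μ ^ 2 - (t - 1) * μ - 2 * t) - (s - 1) * (t - 1) * (μ + 1) ^ 2

theorem continuous_gstQuartic (s t : ℝ) : Continuous (gstQuartic s t) := by
  unfold gstQuartic
  fun_prop

theorem det_smul_one_sub_gstQuotient (s t μ : ℝ) :
    (μ • (1 : Matrix (Fin 4) (Fin 4) ℝ) -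
      !![0, -1, s, 0; -1, 0, 0, t; 1, 0, s - 1, t; 0, 1, s, t - 1]).det = gstQuartic s t μ := by
  rw [det_succ_row_zero]
  simp [Fin.sum_univ_succ, det_fin_three, Fin.succAbove, submatrix, one_apply, gstQuartic]
  ring

theorem gstQuartic_sub_one_add_one (s t μ : ℝ) :
    gstQuartic (s - 1) (t + 1) μ = gstQuartic s t μ + (s - t - 1) * (2 * μ + 3) := by
  unfold gstQuartic
  ring

theorem gstQuartic_neg {s t : ℝ} (hs : 2 ≤ s) (ht : 2 ≤ t) : gstQuartic s t (s + t - 1) < 0 := by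
  have hval : gstQuartic s t (s + t - 1) = (s + t) ^ 2 + s * t - (s + t) * (s ^ 2 + t ^ 2) := by
    unfold gstQuartic
    ring
  have hsq : 2 * (s + t) ≤ s ^ 2 + t ^ 2 := by nlinarith
  nlinarith [mul_le_mul_of_nonneg_left hsq (by linarith : 0 ≤ s + t)]

theorem gstQuartic_pos {s t μ : ℝ} (hs : 1 ≤ s) (ht : 1 ≤ t) (hμ : s + t + 2 ≤ μ) :
    0 < gstQuartic s t μ := by
  have hd : 0 ≤ (μ - (s + t + 2)) * (μ + 4) := mul_nonneg (by linarith) (by linarith)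
  have hu : (t - 1) * (μ + 1) < μ ^ 2 - (s - 1) * μ - 2 * s := by nlinarith
  have hv : (s - 1) * (μ + 1) < μ ^ 2 - (t - 1) * μ - 2 * t := by nlinarith
  have := mul_lt_mul'' hu hv (mul_nonneg (by linarith) (by linarith))
    (mul_nonneg (by linarith) (by linarith))
  unfold gstQuartic
  linarith

end Quartic

section Spectrum

theorem mem_eigenvalueSet_gstMat_iff {s t : ℕ} (hs : 1 ≤ s) (ht : 1 ≤ t) {μ : ℝ} (hμ : 0 < μ) :
    μ ∈ eigenvalueSet (gstMat s t) ↔ gstQuartic s t μ = 0 := by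
  have hdiag : ∀ k, μ + gstPattern k k ≠ 0 := by
    intro k
    fin_cases k <;> simp [gstPattern] <;> linarith
  rw [gstMat_eq_blowup, mem_eigenvalueSet_blowup_iff _ _ (gstClass_surjective s t hs ht) hdiag,
    blowupQuotient_gst, mem_eigenvalueSet_iff_det, det_smul_one_sub_gstQuotient]

theorem exists_root_gt_of_neg {f : ℝ → ℝ} (hf : Continuous f) {a c : ℝ} (ha : f a < 0)
    (hc : ∀ x, c ≤ x → 0 < f x) : ∃ r, a < r ∧ f r = 0 := by
  obtain ⟨r, hr, hr0⟩ :=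
    intermediate_value_Ioo (le_max_left a c) hf.continuousOn ⟨ha, hc _ (le_max_right a c)⟩
  exact ⟨r, hr.1, hr0⟩

theorem lam1_gstMat_root {s t : ℕ} (hs : 2 ≤ s) (ht : 2 ≤ t) :
    (s + t - 1 : ℝ) < lam1 (gstMat s t) ∧ gstQuartic s t (lam1 (gstMat s t)) = 0 := by
  have hs' : (2 : ℝ) ≤ s := by exact_mod_cast hs
  have ht' : (2 : ℝ) ≤ t := by exact_mod_cast ht
  obtain ⟨ρ, hρ, hρ0⟩ := exists_root_gt_of_neg (continuous_gstQuartic s t)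
    (gstQuartic_neg hs' ht') fun μ hμ => gstQuartic_pos (by linarith) (by linarith) hμ
  have hρmem : ρ ∈ eigenvalueSet (gstMat s t) :=
    (mem_eigenvalueSet_gstMat_iff (by omega) (by omega) (by linarith)).mpr hρ0
  have hlt := hρ.trans_le (le_lam1 hρmem)
  exact ⟨hlt, (mem_eigenvalueSet_gstMat_iff (by omega) (by omega) (by linarith)).mp
    (lam1_mem_eigenvalueSet ⟨ρ, hρmem⟩)⟩

theorem lam1_gstMat_lt_shift {s t : ℕ} (hs : 2 ≤ s) (hst : s ≤ t) :
    lam1 (gstMat s t) < lam1 (gstMat (s - 1) (t + 1)) := by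
  obtain ⟨hL, hL0⟩ := lam1_gstMat_root hs (hs.trans hst)
  have hs' : (2 : ℝ) ≤ s := by exact_mod_cast hs
  have hst' : (s : ℝ) ≤ t := by exact_mod_cast hst
  have hcast : ((s - 1 : ℕ) : ℝ) = s - 1 := by rw [Nat.cast_sub (by omega), Nat.cast_one]
  have hneg : gstQuartic ((s - 1 : ℕ) : ℝ) ((t + 1 : ℕ) : ℝ) (lam1 (gstMat s t)) < 0 := by
    rw [hcast, Nat.cast_succ, gstQuartic_sub_one_add_one, hL0, zero_add]
    exact mul_neg_of_neg_of_pos (by linarith) (by linarith)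
  obtain ⟨ρ, hρ, hρ0⟩ := exists_root_gt_of_neg (continuous_gstQuartic _ _) hneg
    fun μ hμ => gstQuartic_pos (by rw [hcast]; linarith) (by simp) hμ
  exact hρ.trans_le (le_lam1 ((mem_eigenvalueSet_gstMat_iff (by omega) (by omega)
    (by linarith)).mpr hρ0))

theorem lam1_gstMat_strictAntiOn (n : ℕ) :
    StrictAntiOn (fun a => lam1 (gstMat a (n - 2 - a))) (Set.Icc 1 ((n - 2) / 2)) := by
  refine strictAntiOn_of_succ_lt Set.ordConnected_Icc fun a _ ha hsucc => ?_
  simp only [Order.succ_eq_add_one, Set.mem_Icc] at ha hsucc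
  have h := lam1_gstMat_lt_shift (s := a + 1) (t := n - 2 - (a + 1)) (by omega) (by omega)
  rwa [show a + 1 - 1 = a from rfl, show n - 2 - (a + 1) + 1 = n - 2 - a by omega] at h

end Spectrum

theorem lam1_gst_strict_mono :
    (∀ s t : ℕ, 2 ≤ s → s ≤ t → lam1 (gstMat s t) < lam1 (gstMat (s - 1) (t + 1))) ∧
      ∀ n a b : ℕ, 1 ≤ a → a < b → 2 * b ≤ n - 2 →
        lam1 (gstMat b (n - 2 - b)) < lam1 (gstMat a (n - 2 - a)) :=
  ⟨fun _ _ hs hst => lam1_gstMat_lt_shift hs hst, fun n _ _ ha hab hb =>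
    lam1_gstMat_strictAntiOn n ⟨ha, by omega⟩ ⟨by omega, by omega⟩ hab⟩
end

section
/- Let n ≥ 7 and let s, t ≥ 1 with s + t = n − 2. Let H₁^{s,t} be the (unsigned) simple graph obtained from the underlying graph of Ġ^{s,t} by deleting the edge u₁v₁. Then λ₁(H₁^{s,t}) < (√(n² − 8) + n − 4)/2, where λ₁ denotes the largest adjacency eigenvalue. -/
/-- The adjacency matrix of the unsigned graph `H₁^{s,t}`: the underlying graph of
`Ġ^{s,t}` (obtained by forgetting the signs, i.e. taking absolute values) with the edge
`u₁v₁` (between the vertices with indices `2` and `s+2`) deleted. -/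
def h1Mat (s t : ℕ) : Matrix (Fin (s + t + 2)) (Fin (s + t + 2)) ℝ :=
  Matrix.of fun x y =>
    if (x.val = 2 ∧ y.val = s + 2) ∨ (x.val = s + 2 ∧ y.val = 2) then 0
    else ((|gstSign s t x y| : ℤ) : ℝ)

lemma lam1_le_bound {n : ℕ} (hn : 0 < n) (A : Matrix (Fin n) (Fin n) ℝ)
    (hA : ∀ i j, 0 ≤ A i j) (y : Fin n → ℝ) (hy : ∀ i, 0 < y i)
    (r : ℝ) (hr : 0 ≤ r) (hrow : ∀ i, A.mulVec y i ≤ r * y i) :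
    lam1 A ≤ r := by
  apply Real.sSup_le _ hr
  rintro μ ⟨x, hx0, hx⟩
  obtain ⟨i, -, hi⟩ := Finset.exists_max_image Finset.univ (fun j => |x j| / y j)
      ⟨⟨0, hn⟩, Finset.mem_univ _⟩
  set c := |x i| / y i with hc
  have hcpos : 0 < c := by
    obtain ⟨j, hj⟩ := Function.ne_iff.mp hx0
    exact lt_of_lt_of_le (div_pos (abs_pos.mpr hj) (hy j)) (hi j (Finset.mem_univ _))
  have hxi : |x i| = c * y i := by
    rw [hc, div_mul_cancel₀]
    exact (hy i).ne'
  have hb : ∀ j, |x j| ≤ c * y j := by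
    intro j
    have h1 := hi j (Finset.mem_univ _)
    calc |x j| = (|x j| / y j) * y j := by rw [div_mul_cancel₀]; exact (hy j).ne'
    _ ≤ c * y j := mul_le_mul_of_nonneg_right h1 (hy j).le
  have key : |μ| * |x i| ≤ r * (c * y i) := by
    calc |μ| * |x i| = |μ * x i| := (abs_mul _ _).symm
      _ = |(A.mulVec x) i| := by rw [hx]; simp [Pi.smul_apply, smul_eq_mul]
      _ = |∑ j, A i j * x j| := by simp [Matrix.mulVec, dotProduct]
      _ ≤ ∑ j, |A i j * x j| := Finset.abs_sum_le_sum_abs _ _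
      _ ≤ ∑ j, A i j * (c * y j) := by
          apply Finset.sum_le_sum; intro j _
          rw [abs_mul, abs_of_nonneg (hA i j)]
          exact mul_le_mul_of_nonneg_left (hb j) (hA i j)
      _ = c * ∑ j, A i j * y j := by rw [Finset.mul_sum]; apply Finset.sum_congr rfl; intros; ring
      _ = c * (A.mulVec y i) := by simp [Matrix.mulVec, dotProduct]
      _ ≤ c * (r * y i) := mul_le_mul_of_nonneg_left (hrow i) hcpos.le
      _ = r * (c * y i) := by ring
  rw [← hxi] at key
  have hxipos : 0 < |x i| := by rw [hxi]; exact mul_pos hcpos (hy i)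
  exact le_trans (le_abs_self μ) (le_of_mul_le_mul_right key hxipos)

lemma sum_shape (s t : ℕ) (hs : 1 ≤ s) (ht : 1 ≤ t) (c0 c1 c2 c3 cU cV : ℝ) :
    (∑ m ∈ Finset.range (s+t+2), (if m = 0 then c0 else if m = 1 then c1
      else if m = 2 then c2 else if m = s+2 then c3 else if m < s+2 then cU else cV))
    = c0 + c1 + c2 + c3 + ((s:ℝ)-1)*cU + ((t:ℝ)-1)*cV := by
  set f : ℕ → ℝ := fun m => (if m = 0 then c0 else if m = 1 then c1
      else if m = 2 then c2 else if m = s+2 then c3 else if m < s+2 then cU else cV) with hf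
  rw [Finset.range_eq_Ico]
  rw [← Finset.sum_Ico_consecutive f (by omega : 0 ≤ 3) (by omega : 3 ≤ s+t+2)]
  rw [← Finset.sum_Ico_consecutive f (by omega : 3 ≤ s+2) (by omega : s+2 ≤ s+t+2)]
  rw [← Finset.sum_Ico_consecutive f (by omega : s+2 ≤ s+3) (by omega : s+3 ≤ s+t+2)]
  have h0 : ∑ m ∈ Finset.Ico 0 3, f m = c0 + c1 + c2 := by
    rw [← Finset.range_eq_Ico, Finset.sum_range_succ, Finset.sum_range_succ,
      Finset.sum_range_one]
    simp [hf]
  have hU : ∑ m ∈ Finset.Ico 3 (s+2), f m = ((s:ℝ)-1) * cU := by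
    have hc : ∀ m ∈ Finset.Ico 3 (s+2), f m = cU := by
      intro m hm
      rw [Finset.mem_Ico] at hm
      simp only [hf]
      rw [if_neg (by omega), if_neg (by omega), if_neg (by omega), if_neg (by omega),
        if_pos (by omega)]
    rw [Finset.sum_congr rfl hc, Finset.sum_const, Nat.card_Ico, nsmul_eq_mul]
    have h1 : s + 2 - 3 = s - 1 := by omega
    rw [h1, Nat.cast_sub hs, Nat.cast_one]
  have h3 : ∑ m ∈ Finset.Ico (s+2) (s+3), f m = c3 := by
    have he : Finset.Ico (s+2) (s+3) = {s+2} := by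
      ext m; simp only [Finset.mem_Ico, Finset.mem_singleton]; omega
    rw [he, Finset.sum_singleton]
    simp only [hf]
    rw [if_neg (by omega), if_neg (by omega), if_neg (by omega)]
    simp
  have hV : ∑ m ∈ Finset.Ico (s+3) (s+t+2), f m = ((t:ℝ)-1) * cV := by
    have hc : ∀ m ∈ Finset.Ico (s+3) (s+t+2), f m = cV := by
      intro m hm
      rw [Finset.mem_Ico] at hm
      simp only [hf]
      rw [if_neg (by omega), if_neg (by omega), if_neg (by omega), if_neg (by omega),
        if_neg (by omega)]
    rw [Finset.sum_congr rfl hc, Finset.sum_const, Nat.card_Ico, nsmul_eq_mul]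
    have h1 : s + t + 2 - (s+3) = t - 1 := by omega
    rw [h1, Nat.cast_sub ht, Nat.cast_one]
  rw [h0, hU, h3, hV]; ring


lemma auxII' (x z e : ℝ) (hx : 0 ≤ x) (hz : 0 ≤ z) (he : 0 ≤ e) (hf : 0 ≤ 1 - e)
    (hg : 0 ≤ x + z - 3) :
    0 ≤ (2)*z*z*z*e + (2)*z*z*z*z + (5)*x*z*z*e + (7)*x*z*z*z + (4)*x*x*z*e + (9)*x*x*z*z + (1)*x*x*x*e + (5)*x*x*x*z + (1)*x*x*x*x + (6)*z*z*e + (12)*z*z*z + (11)*x*z*e + (32)*x*z*z + (5)*x*x*e + (28)*x*x*z + (8)*x*x*x + (5/8)*z*e + (117/8)*z*z + (-3/8)*x*e + (109/4)*x*z + (101/8)*x*x + (-3/8)*e + (1/2)*z + (3/2)*x + (-11/4) := by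
  linarith [mul_nonneg hf (by linarith : (0:ℝ) ≤ 1 + x),
    hg,
    mul_nonneg hz hg,
    (mul_nonneg hz he),
    (mul_nonneg hz hz),
    (mul_nonneg (mul_nonneg hz hz) he),
    (mul_nonneg (mul_nonneg hz hz) hz),
    (mul_nonneg (mul_nonneg (mul_nonneg hz hz) hz) he),
    (mul_nonneg (mul_nonneg (mul_nonneg hz hz) hz) hz),
    hx,
    (mul_nonneg hx hz),
    (mul_nonneg (mul_nonneg hx hz) he),
    (mul_nonneg (mul_nonneg hx hz) hz),
    (mul_nonneg (mul_nonneg (mul_nonneg hx hz) hz) he),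
    (mul_nonneg (mul_nonneg (mul_nonneg hx hz) hz) hz),
    (mul_nonneg hx hx),
    (mul_nonneg (mul_nonneg hx hx) he),
    (mul_nonneg (mul_nonneg hx hx) hz),
    (mul_nonneg (mul_nonneg (mul_nonneg hx hx) hz) he),
    (mul_nonneg (mul_nonneg (mul_nonneg hx hx) hz) hz),
    (mul_nonneg (mul_nonneg hx hx) hx),
    (mul_nonneg (mul_nonneg (mul_nonneg hx hx) hx) he),
    (mul_nonneg (mul_nonneg (mul_nonneg hx hx) hx) hz),
    (mul_nonneg (mul_nonneg (mul_nonneg hx hx) hx) hx)]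

lemma auxIV' (x z e : ℝ) (hx : 0 ≤ x) (hz : 0 ≤ z) (he : 0 ≤ e) (hf : 0 ≤ 1 - e)
    (hg : 0 ≤ x + z - 3) :
    0 ≤ (1)*z*z*z*z*e + (1)*z*z*z*z*z + (3)*x*z*z*z*e + (4)*x*z*z*z*z + (3)*x*x*z*z*e + (6)*x*x*z*z*z + (1)*x*x*x*z*e + (4)*x*x*x*z*z + (1)*x*x*x*x*z + (37/8)*z*z*z*e + (61/8)*z*z*z*z + (87/8)*x*z*z*e + (49/2)*x*z*z*z + (63/8)*x*x*z*e + (111/4)*x*x*z*z + (13/8)*x*x*x*e + (25/2)*x*x*x*z + (13/8)*x*x*x*x + (25/8)*z*z*e + (15)*z*z*z + (21/4)*x*z*e + (37)*x*z*z + (17/8)*x*x*e + (29)*x*x*z + (7)*x*x*x + (-17/4)*z*e + (31/8)*z*z + (-9/4)*x*e + (19/4)*x*z + (7/8)*x*x + (-17/8)*e + (-81/8)*z + (-81/8)*x + (-21/4) := by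
  linarith [hf,
    mul_nonneg hz hf,
    mul_nonneg hx hf,
    hg,
    mul_nonneg hx hg,
    mul_nonneg hz hg,
    mul_nonneg (mul_nonneg hx hx) hg,
    mul_nonneg (mul_nonneg hx hz) hg,
    mul_nonneg (mul_nonneg hz hz) hg,
    (mul_nonneg (mul_nonneg hz hz) he),
    (mul_nonneg (mul_nonneg hz hz) hz),
    (mul_nonneg (mul_nonneg (mul_nonneg hz hz) hz) he),
    (mul_nonneg (mul_nonneg (mul_nonneg hz hz) hz) hz),
    (mul_nonneg (mul_nonneg (mul_nonneg (mul_nonneg hz hz) hz) hz) he),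
    (mul_nonneg (mul_nonneg (mul_nonneg (mul_nonneg hz hz) hz) hz) hz),
    (mul_nonneg (mul_nonneg hx hz) he),
    (mul_nonneg (mul_nonneg hx hz) hz),
    (mul_nonneg (mul_nonneg (mul_nonneg hx hz) hz) he),
    (mul_nonneg (mul_nonneg (mul_nonneg hx hz) hz) hz),
    (mul_nonneg (mul_nonneg (mul_nonneg (mul_nonneg hx hz) hz) hz) he),
    (mul_nonneg (mul_nonneg (mul_nonneg (mul_nonneg hx hz) hz) hz) hz),
    (mul_nonneg (mul_nonneg hx hx) he),
    (mul_nonneg (mul_nonneg hx hx) hz),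
    (mul_nonneg (mul_nonneg (mul_nonneg hx hx) hz) he),
    (mul_nonneg (mul_nonneg (mul_nonneg hx hx) hz) hz),
    (mul_nonneg (mul_nonneg (mul_nonneg (mul_nonneg hx hx) hz) hz) he),
    (mul_nonneg (mul_nonneg (mul_nonneg (mul_nonneg hx hx) hz) hz) hz),
    (mul_nonneg (mul_nonneg hx hx) hx),
    (mul_nonneg (mul_nonneg (mul_nonneg hx hx) hx) he),
    (mul_nonneg (mul_nonneg (mul_nonneg hx hx) hx) hz),
    (mul_nonneg (mul_nonneg (mul_nonneg (mul_nonneg hx hx) hx) hz) he),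
    (mul_nonneg (mul_nonneg (mul_nonneg (mul_nonneg hx hx) hx) hz) hz),
    (mul_nonneg (mul_nonneg (mul_nonneg hx hx) hx) hx),
    (mul_nonneg (mul_nonneg (mul_nonneg (mul_nonneg hx hx) hx) hx) hz)]


lemma auxII (S T l : ℝ) (hS : 1 ≤ S) (hT : 1 ≤ T) (hST : 5 ≤ S + T)
    (hla : S + T - 1 ≤ l) (hlb : l ≤ S + T)
    (hl2 : l^2 = (S+T-2)*l + 2*(S+T) - 2) :
    ((S+T-2)*l + (2*S+2*T-3)) * ((S-1)*l + (S+T-13/8)) + l * ((T-1)*l + (S+T-13/8))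
      ≤ 2 * ((((S+T-2)*l + (2*S+2*T-3)))^2 - l^2) := by
  have h := auxII' (S-1) (T-1) (l-(S+T-1)) (by linarith) (by linarith) (by linarith)
    (by linarith) (by linarith)
  have key : 2 * ((((S+T-2)*l + (2*S+2*T-3)))^2 - l^2)
      - (((S+T-2)*l + (2*S+2*T-3)) * ((S-1)*l + (S+T-13/8)) + l * ((T-1)*l + (S+T-13/8)))
      = (1)*l*S*S*S + (4)*l*S*S*T + (-2)*l*S*S + (5)*l*S*T*T + (-7)*l*S*T + (-43/8)*l*S
        + (2)*l*T*T*T + (-5)*l*T*T + (-19/8)*l*T + (75/8)*l + (2)*S*S*S + (8)*S*S*T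
        + (-6)*S*S + (10)*S*T*T + (-20)*S*T + (9/4)*S + (4)*T*T*T + (-14)*T*T
        + (33/4)*T + (25/8) := by
    linear_combination ((1)*S*S + (3)*S*T + (-5)*S + (2)*T*T + (-8)*T + (5)) * hl2
  linarith [h, key]

lemma auxIV (S T l : ℝ) (hS : 1 ≤ S) (hT : 1 ≤ T) (hST : 5 ≤ S + T)
    (hla : S + T - 1 ≤ l) (hlb : l ≤ S + T)
    (hl2 : l^2 = (S+T-2)*l + 2*(S+T) - 2) :
    (l+1) * (((S+T-2)*l + (2*S+2*T-3)) * ((S-1)*l + (S+T-13/8)) + l * ((T-1)*l + (S+T-13/8)))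
      + (((S+T-2)*l + (2*S+2*T-3)) * ((T-1)*l + (S+T-13/8)) + l * ((S-1)*l + (S+T-13/8)))
      ≤ (l+13/8) * ((((S+T-2)*l + (2*S+2*T-3)))^2 - l^2) := by
  have h := auxIV' (S-1) (T-1) (l-(S+T-1)) (by linarith) (by linarith) (by linarith)
    (by linarith) (by linarith)
  have key : (l+13/8) * ((((S+T-2)*l + (2*S+2*T-3)))^2 - l^2)
      - ((l+1) * (((S+T-2)*l + (2*S+2*T-3)) * ((S-1)*l + (S+T-13/8)) + l * ((T-1)*l + (S+T-13/8)))
        + (((S+T-2)*l + (2*S+2*T-3)) * ((T-1)*l + (S+T-13/8)) + l * ((S-1)*l + (S+T-13/8))))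
      = (1)*l*S*S*S*T + (5/8)*l*S*S*S + (3)*l*S*S*T*T + (-9/8)*l*S*S*T + (-37/8)*l*S*S
        + (3)*l*S*T*T*T + (-33/8)*l*S*T*T + (-33/4)*l*S*T + (31/4)*l*S + (1)*l*T*T*T*T
        + (-19/8)*l*T*T*T + (-29/8)*l*T*T + (31/4)*l*T + (-17/8)*l + (2)*S*S*S*T
        + (5/4)*S*S*S + (6)*S*S*T*T + (-17/4)*S*S*T + (-21/2)*S*S + (6)*S*T*T*T
        + (-49/4)*S*T*T + (-9)*S*T + (69/4)*S + (2)*T*T*T*T + (-27/4)*T*T*T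
        + (3/2)*T*T + (45/4)*T + (-61/8) := by
    linear_combination ((1)*l*S*T + (-1)*l*S + (1)*l*T*T + (-4)*l*T + (2)*l + (1)*S*S*T
      + (5/8)*S*S + (2)*S*T*T + (-7/4)*S*T + (-47/8)*S + (1)*T*T*T + (-19/8)*T*T
      + (-23/8)*T + (25/4)) * hl2
  linarith [h, key]
lemma keyRowU (S T l : ℝ) (hl2 : l^2 = (S+T-2)*l + 2*(S+T) - 2) :
    (l^2 - 1/8)*(l*(((S+T-2)*l + (2*S+2*T-3))*((S-1)*l + (S+T-13/8)) + l*((T-1)*l + (S+T-13/8)))) - l*(l*(((S+T-2)*l + (2*S+2*T-3))*((T-1)*l + (S+T-13/8)) + l*((S-1)*l + (S+T-13/8))) + ((((S+T-2)*l + (2*S+2*T-3))*((S-1)*l + (S+T-13/8)) + l*((T-1)*l + (S+T-13/8))) + (S+T-15/8)*(((S+T-2)*l + (2*S+2*T-3))^2 - l^2)) + (S-1)*(l*(((S+T-2)*l + (2*S+2*T-3))^2 - l^2)))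
      = l*(2*(((S+T-2)*l + (2*S+2*T-3))^2 - l^2) - (((S+T-2)*l + (2*S+2*T-3))*((S-1)*l + (S+T-13/8)) + l*((T-1)*l + (S+T-13/8))))/8 := by
  linear_combination ((1)*l^3*S*S + (1)*l^3*S*T + (-3)*l^3*S + l^3 + (3)*l*l*S*S + (4)*l*l*S*T + (-61/8)*l*l*S + (1)*l*l*T*T + (-37/8)*l*l*T + (37/8)*l*l + (2)*l*S*S + (4)*l*S*T + (-25/4)*l*S + (2)*l*T*T + (-25/4)*l*T + (39/8)*l) * hl2

lemma keyRowU1 (S T l : ℝ) (hl2 : l^2 = (S+T-2)*l + 2*(S+T) - 2) :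
    (l^2 - 1/8)*((((S+T-2)*l + (2*S+2*T-3))*((S-1)*l + (S+T-13/8)) + l*((T-1)*l + (S+T-13/8))) + (S+T-15/8)*(((S+T-2)*l + (2*S+2*T-3))^2 - l^2)) - l*(l*(((S+T-2)*l + (2*S+2*T-3))*((S-1)*l + (S+T-13/8)) + l*((T-1)*l + (S+T-13/8))) + (S+T-2)*(l*(((S+T-2)*l + (2*S+2*T-3))^2 - l^2)))
      = ((((S+T-2)*l + (2*S+2*T-3))^2 - l^2)*(((S+T-2)*l + (2*S+2*T-3)) - (S+T)))/8 + (23/64)*(((S+T-2)*l + (2*S+2*T-3))^2 - l^2) - (((S+T-2)*l + (2*S+2*T-3))*((S-1)*l + (S+T-13/8)) + l*((T-1)*l + (S+T-13/8)))/8 := by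
  linear_combination ((1/8)*l*l*S*S + (1/4)*l*l*S*T + (-1/2)*l*l*S + (1/8)*l*l*T*T + (-1/2)*l*l*T + (3/8)*l*l + (1/2)*l*S*S + (1)*l*S*T + (-7/4)*l*S + (1/2)*l*T*T + (-7/4)*l*T + (3/2)*l + (1/2)*S*S + (1)*S*T + (-3/2)*S + (1/2)*T*T + (-3/2)*T + (9/8)) * hl2

lemma keyRowMid (S T l : ℝ) (hl2 : l^2 = (S+T-2)*l + 2*(S+T) - 2) :
    (l^2 - 1/8)*(l*(((S+T-2)*l + (2*S+2*T-3))^2 - l^2)) - l*(l*(((S+T-2)*l + (2*S+2*T-3))*((S-1)*l + (S+T-13/8)) + l*((T-1)*l + (S+T-13/8))) + ((((S+T-2)*l + (2*S+2*T-3))*((S-1)*l + (S+T-13/8)) + l*((T-1)*l + (S+T-13/8)))+(S+T-15/8)*(((S+T-2)*l + (2*S+2*T-3))^2 - l^2)) + ((((S+T-2)*l + (2*S+2*T-3))*((T-1)*l + (S+T-13/8)) + l*((S-1)*l + (S+T-13/8)))+(S+T-15/8)*(((S+T-2)*l + (2*S+2*T-3))^2 - l^2)) + (S+T-3)*(l*(((S+T-2)*l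 + (2*S+2*T-3))^2 - l^2)))
      = l*((l+13/8)*(((S+T-2)*l + (2*S+2*T-3))^2 - l^2) - ((l+1)*(((S+T-2)*l + (2*S+2*T-3))*((S-1)*l + (S+T-13/8)) + l*((T-1)*l + (S+T-13/8))) + (((S+T-2)*l + (2*S+2*T-3))*((T-1)*l + (S+T-13/8)) + l*((S-1)*l + (S+T-13/8))))) := by
  linear_combination ((1)*l^3*S*S + (2)*l^3*S*T + (-4)*l^3*S + (1)*l^3*T*T + (-4)*l^3*T + (3)*l*l*l + (4)*l*l*S*S + (8)*l*l*S*T + (-14)*l*l*S + (4)*l*l*T*T + (-14)*l*l*T + (12)*l*l + (4)*l*S*S + (8)*l*S*T + (-12)*l*S + (4)*l*T*T + (-12)*l*T + (9)*l) * hl2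


set_option maxHeartbeats 1000000 in
lemma rowPt0 (s t : ℕ) (hs : 1 ≤ s) (ht : 1 ≤ t) (yu yv yp yq yc : ℝ)
    (i j : Fin (s+t+2)) (hi : (i:ℕ) = 0) :
    h1Mat s t i j * (if (j:ℕ) = 0 then yu else if (j:ℕ) = 1 then yv
      else if (j:ℕ) = 2 then yp else if (j:ℕ) = s+2 then yq else yc)
    = (if (j:ℕ) = 0 then (0:ℝ) else if (j:ℕ) = 1 then yv else if (j:ℕ) = 2 then yp
       else if (j:ℕ) = s+2 then 0 else if (j:ℕ) < s+2 then yc else 0) := by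
  simp only [h1Mat, Matrix.of_apply, gstSign, Fin.ext_iff]
  split_ifs <;> first | (exfalso; omega) | norm_num

set_option maxHeartbeats 1000000 in
lemma rowPt1 (s t : ℕ) (hs : 1 ≤ s) (ht : 1 ≤ t) (yu yv yp yq yc : ℝ)
    (i j : Fin (s+t+2)) (hi : (i:ℕ) = 1) :
    h1Mat s t i j * (if (j:ℕ) = 0 then yu else if (j:ℕ) = 1 then yv
      else if (j:ℕ) = 2 then yp else if (j:ℕ) = s+2 then yq else yc)
    = (if (j:ℕ) = 0 then (yu:ℝ) else if (j:ℕ) = 1 then 0 else if (j:ℕ) = 2 then 0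
       else if (j:ℕ) = s+2 then yq else if (j:ℕ) < s+2 then 0 else yc) := by
  simp only [h1Mat, Matrix.of_apply, gstSign, Fin.ext_iff]
  split_ifs <;> first | (exfalso; omega) | norm_num

set_option maxHeartbeats 1000000 in
lemma rowPt2 (s t : ℕ) (hs : 1 ≤ s) (ht : 1 ≤ t) (yu yv yp yq yc : ℝ)
    (i j : Fin (s+t+2)) (hi : (i:ℕ) = 2) :
    h1Mat s t i j * (if (j:ℕ) = 0 then yu else if (j:ℕ) = 1 then yv
      else if (j:ℕ) = 2 then yp else if (j:ℕ) = s+2 then yq else yc)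
    = (if (j:ℕ) = 0 then (yu:ℝ) else if (j:ℕ) = 1 then 0 else if (j:ℕ) = 2 then 0
       else if (j:ℕ) = s+2 then 0 else if (j:ℕ) < s+2 then yc else yc) := by
  simp only [h1Mat, Matrix.of_apply, gstSign, Fin.ext_iff]
  split_ifs <;> first | (exfalso; omega) | norm_num

set_option maxHeartbeats 1000000 in
lemma rowPtS2 (s t : ℕ) (hs : 1 ≤ s) (ht : 1 ≤ t) (yu yv yp yq yc : ℝ)
    (i j : Fin (s+t+2)) (hi : (i:ℕ) = s+2) :
    h1Mat s t i j * (if (j:ℕ) = 0 then yu else if (j:ℕ) = 1 then yv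
      else if (j:ℕ) = 2 then yp else if (j:ℕ) = s+2 then yq else yc)
    = (if (j:ℕ) = 0 then (0:ℝ) else if (j:ℕ) = 1 then yv else if (j:ℕ) = 2 then 0
       else if (j:ℕ) = s+2 then 0 else if (j:ℕ) < s+2 then yc else yc) := by
  simp only [h1Mat, Matrix.of_apply, gstSign, Fin.ext_iff]
  split_ifs <;> first | (exfalso; omega) | norm_num

set_option maxHeartbeats 1000000 in
lemma rowPtU (s t : ℕ) (hs : 1 ≤ s) (ht : 1 ≤ t) (yu yv yp yq yc : ℝ)
    (i j : Fin (s+t+2)) (hi : 3 ≤ (i:ℕ) ∧ (i:ℕ) < s+2) :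
    h1Mat s t i j * (if (j:ℕ) = 0 then yu else if (j:ℕ) = 1 then yv
      else if (j:ℕ) = 2 then yp else if (j:ℕ) = s+2 then yq else yc)
    = ((if (j:ℕ) = 0 then (yu:ℝ) else if (j:ℕ) = 1 then 0 else if (j:ℕ) = 2 then yp
       else if (j:ℕ) = s+2 then yq else if (j:ℕ) < s+2 then yc else yc)
      - (if (j:ℕ) = (i:ℕ) then yc else 0)) := by
  simp only [h1Mat, Matrix.of_apply, gstSign, Fin.ext_iff]
  split_ifs <;> first | (exfalso; omega) | norm_num

set_option maxHeartbeats 1000000 in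
lemma rowPtV (s t : ℕ) (hs : 1 ≤ s) (ht : 1 ≤ t) (yu yv yp yq yc : ℝ)
    (i j : Fin (s+t+2)) (hi : s+3 ≤ (i:ℕ)) :
    h1Mat s t i j * (if (j:ℕ) = 0 then yu else if (j:ℕ) = 1 then yv
      else if (j:ℕ) = 2 then yp else if (j:ℕ) = s+2 then yq else yc)
    = ((if (j:ℕ) = 0 then (0:ℝ) else if (j:ℕ) = 1 then yv else if (j:ℕ) = 2 then yp
       else if (j:ℕ) = s+2 then yq else if (j:ℕ) < s+2 then yc else yc)
      - (if (j:ℕ) = (i:ℕ) then yc else 0)) := by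
  simp only [h1Mat, Matrix.of_apply, gstSign, Fin.ext_iff]
  split_ifs <;> first | (exfalso; omega) | norm_num

/-!
STATEMENT 11: Let n ≥ 7 and let s, t ≥ 1 with s + t = n − 2.  Let H₁^{s,t} be the
(unsigned) simple graph obtained from the underlying graph of Ġ^{s,t} by deleting the
edge u₁v₁.  Then λ₁(H₁^{s,t}) < (√(n² − 8) + n − 4)/2.
-/
set_option maxHeartbeats 1000000 in
theorem lam1_h1_lt (n s t : ℕ) (hn : 7 ≤ n) (hs : 1 ≤ s) (ht : 1 ≤ t)
    (hst : s + t = n - 2) :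
    lam1 (h1Mat s t) < (Real.sqrt ((n : ℝ) ^ 2 - 8) + n - 4) / 2 := by
  have hst5 : 5 ≤ s + t := by omega
  have hS : (1:ℝ) ≤ (s:ℝ) := by exact_mod_cast hs
  have hT : (1:ℝ) ≤ (t:ℝ) := by exact_mod_cast ht
  have hST : (5:ℝ) ≤ (s:ℝ) + (t:ℝ) := by exact_mod_cast hst5
  have hncast : (n : ℝ) = (s:ℝ) + (t:ℝ) + 2 := by
    have h : n = s + t + 2 := by omega
    rw [h]; push_cast; ring
  rw [hncast]
  set w : ℝ := Real.sqrt (((s:ℝ) + (t:ℝ) + 2)^2 - 8) with hw0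
  set l : ℝ := (w + ((s:ℝ) + (t:ℝ) + 2) - 4)/2 with hl0
  have hwnn : 0 ≤ w := Real.sqrt_nonneg _
  have hw2 : w^2 = ((s:ℝ) + (t:ℝ) + 2)^2 - 8 := Real.sq_sqrt (by nlinarith only [hST])
  have hwlo : (s:ℝ) + (t:ℝ) ≤ w := by nlinarith only [hw2, hwnn, hST]
  have hwhi : w ≤ (s:ℝ) + (t:ℝ) + 2 := by nlinarith only [hw2, hwnn, hST]
  have hla : (s:ℝ) + (t:ℝ) - 1 ≤ l := by rw [hl0]; linarith only [hwlo]
  have hlb : l ≤ (s:ℝ) + (t:ℝ) := by rw [hl0]; linarith only [hwhi]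
  have hl2 : l^2 = ((s:ℝ)+(t:ℝ)-2)*l + 2*((s:ℝ)+(t:ℝ)) - 2 := by
    rw [hl0]; linear_combination (1/4) * hw2
  have hl2' : l^2 = ((t:ℝ)+(s:ℝ)-2)*l + 2*((t:ℝ)+(s:ℝ)) - 2 := by linarith only [hl2]
  have hl4 : (4:ℝ) ≤ l := by linarith only [hla, hST]
  clear_value w l
  have hlpos : (0:ℝ) < l := by linarith only [hl4]
  set D : ℝ := ((s:ℝ)+(t:ℝ)-2)*l + (2*(s:ℝ)+2*(t:ℝ)-3) with hD0
  set PP : ℝ := ((s:ℝ)-1)*l + ((s:ℝ)+(t:ℝ)-13/8) with hP0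
  set QQ : ℝ := ((t:ℝ)-1)*l + ((s:ℝ)+(t:ℝ)-13/8) with hQ0
  set EE : ℝ := D^2 - l^2 with hE0
  set NA : ℝ := D*PP + l*QQ with hNA0
  set NB : ℝ := D*QQ + l*PP with hNB0
  set Wc : ℝ := (s:ℝ)+(t:ℝ)-15/8 with hW0
  set yu : ℝ := l*NA with hyu0
  set yv : ℝ := l*NB with hyv0
  set yp : ℝ := NA + Wc*EE with hyp0
  set yq : ℝ := NB + Wc*EE with hyq0
  set yc : ℝ := l*EE with hyc0
  set r : ℝ := (l^2 - 1/8)/l with hr0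
  clear_value D PP QQ EE NA NB Wc yu yv yp yq yc r
  have hDl : 0 < D - l := by
    rw [hD0]
    nlinarith only [mul_nonneg (by linarith only [hST] : (0:ℝ) ≤ (s:ℝ)+(t:ℝ)-3)
      (by linarith only [hl4] : (0:ℝ) ≤ l), hST, hl4]
  have hDpos : 0 < D := by linarith only [hDl, hlpos]
  have hEpos : 0 < EE := by
    rw [hE0]
    nlinarith only [mul_pos hDl (by linarith only [hDl, hlpos] : (0:ℝ) < D + l)]
  have hPpos : 0 < PP := by
    rw [hP0]
    nlinarith only [mul_nonneg (by linarith only [hS] : (0:ℝ) ≤ (s:ℝ)-1)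
      (by linarith only [hl4] : (0:ℝ) ≤ l), hST]
  have hQpos : 0 < QQ := by
    rw [hQ0]
    nlinarith only [mul_nonneg (by linarith only [hT] : (0:ℝ) ≤ (t:ℝ)-1)
      (by linarith only [hl4] : (0:ℝ) ≤ l), hST]
  have hNApos : 0 < NA := by
    rw [hNA0]; exact add_pos (mul_pos hDpos hPpos) (mul_pos hlpos hQpos)
  have hNBpos : 0 < NB := by
    rw [hNB0]; exact add_pos (mul_pos hDpos hQpos) (mul_pos hlpos hPpos)
  have hWpos : 0 < Wc := by rw [hW0]; linarith only [hST]
  have hyupos : 0 < yu := by rw [hyu0]; exact mul_pos hlpos hNApos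
  have hyvpos : 0 < yv := by rw [hyv0]; exact mul_pos hlpos hNBpos
  have hyppos : 0 < yp := by rw [hyp0]; exact add_pos hNApos (mul_pos hWpos hEpos)
  have hyqpos : 0 < yq := by rw [hyq0]; exact add_pos hNBpos (mul_pos hWpos hEpos)
  have hycpos : 0 < yc := by rw [hyc0]; exact mul_pos hlpos hEpos
  have hr : 0 ≤ r := by
    rw [hr0]; apply div_nonneg _ hlpos.le; nlinarith only [hl4]
  have hIIa : NA ≤ 2*EE := by
    have h := auxII (s:ℝ) (t:ℝ) l hS hT hST hla hlb hl2
    simp only [hNA0, hE0, hD0, hP0, hQ0]; linarith only [h]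
  have hIIb : NB ≤ 2*EE := by
    have h := auxII (t:ℝ) (s:ℝ) l hT hS (by linarith only [hST])
      (by linarith only [hla]) (by linarith only [hlb]) hl2'
    simp only [hNB0, hE0, hD0, hP0, hQ0]; linarith only [h]
  have hIVa : (l+1)*NA + NB ≤ (l+13/8)*EE := by
    have h := auxIV (s:ℝ) (t:ℝ) l hS hT hST hla hlb hl2
    simp only [hNA0, hNB0, hE0, hD0, hP0, hQ0]; linarith only [h]
  have hIVb : (l+1)*NB + NA ≤ (l+13/8)*EE := by
    have h := auxIV (t:ℝ) (s:ℝ) l hT hS (by linarith only [hST])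
      (by linarith only [hla]) (by linarith only [hlb]) hl2'
    simp only [hNA0, hNB0, hE0, hD0, hP0, hQ0]; linarith only [h]
  have hD14 : (s:ℝ) + (t:ℝ) + 14 ≤ D := by
    rw [hD0]
    nlinarith only [mul_nonneg (by linarith only [hST] : (0:ℝ) ≤ (s:ℝ)+(t:ℝ)-5)
      (by linarith only [hl4] : (0:ℝ) ≤ l), hST, hl4]
  set y : Fin (s+t+2) → ℝ := fun j => if (j:ℕ) = 0 then yu else if (j:ℕ) = 1 then yv
    else if (j:ℕ) = 2 then yp else if (j:ℕ) = s+2 then yq else yc with hy0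
  have hypos : ∀ i, 0 < y i := by
    intro i
    simp only [hy0]
    split_ifs <;> assumption
  have hAnn : ∀ i j, 0 ≤ h1Mat s t i j := by
    intro i j
    simp only [h1Mat, Matrix.of_apply]
    split_ifs
    · exact le_refl 0
    · positivity
  have hmonster : ∀ i : Fin (s+t+2), (h1Mat s t).mulVec y i ≤ r * y i := by
    intro i
    have hmv : (h1Mat s t).mulVec y i = ∑ j, h1Mat s t i j * y j := by
      simp [Matrix.mulVec, dotProduct]
    have hilt : (i:ℕ) < s+t+2 := i.isLt
    have hcase : (i:ℕ) = 0 ∨ (i:ℕ) = 1 ∨ (i:ℕ) = 2 ∨ (i:ℕ) = s+2 ∨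
        (3 ≤ (i:ℕ) ∧ (i:ℕ) < s+2) ∨ (s+3 ≤ (i:ℕ) ∧ (i:ℕ) < s+t+2) := by omega
    have hIVaR : (0:ℝ) ≤ (l+13/8)*EE - ((l+1)*NA + NB) := by linarith only [hIVa]
    have hIVbR : (0:ℝ) ≤ (l+13/8)*EE - ((l+1)*NB + NA) := by linarith only [hIVb]
    have hP2a : (0:ℝ) ≤ l*(2*EE - NA) := mul_nonneg hlpos.le (by linarith only [hIIa])
    have hP2b : (0:ℝ) ≤ l*(2*EE - NB) := mul_nonneg hlpos.le (by linarith only [hIIb])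
    have hP2c : (0:ℝ) ≤ l*((l+13/8)*EE - ((l+1)*NA + NB)) := mul_nonneg hlpos.le hIVaR
    have hP2d : (0:ℝ) ≤ l*((l+13/8)*EE - ((l+1)*NB + NA)) := mul_nonneg hlpos.le hIVbR
    have hED14 : (0:ℝ) ≤ EE*(D - ((s:ℝ)+(t:ℝ)) - 14) :=
      mul_nonneg hEpos.le (by linarith only [hD14])
    have hIIaR := hIIa
    have hIIbR := hIIb
    have hEposR := hEpos
    simp only [hyu0, hyv0, hyp0, hyq0, hyc0, hNA0, hNB0, hE0, hW0, hD0, hP0, hQ0] at hP2a hP2b hP2c hP2d hED14 hIIaR hIIbR hEposR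
    rcases hcase with hi | hi | hi | hi | hi | hi
    -- row u
    · have hpt : ∀ j : Fin (s+t+2), h1Mat s t i j * y j
          = (if (j:ℕ) = 0 then (0:ℝ) else if (j:ℕ) = 1 then yv else if (j:ℕ) = 2 then yp
             else if (j:ℕ) = s+2 then 0 else if (j:ℕ) < s+2 then yc else 0) := by
        intro j
        simp only [hy0]
        exact rowPt0 s t hs ht yu yv yp yq yc i j hi
      have hsum : ∑ j, h1Mat s t i j * y j
          = 0 + yv + yp + 0 + ((s:ℝ)-1)*yc + ((t:ℝ)-1)*0 := by
        rw [Finset.sum_congr rfl (fun j _ => hpt j),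
          Fin.sum_univ_eq_sum_range (fun m => if m = 0 then (0:ℝ) else if m = 1 then yv
            else if m = 2 then yp else if m = s+2 then 0 else if m < s+2 then yc else 0)
            (s+t+2)]
        exact sum_shape s t hs ht 0 yv yp 0 yc 0
      have hyi : y i = yu := by simp only [hy0]; rw [if_pos hi]
      rw [hmv, hsum, hyi, hr0, div_mul_eq_mul_div, le_div_iff₀ hlpos]
      have hkey := keyRowU (s:ℝ) (t:ℝ) l hl2
      have h1 := auxII (s:ℝ) (t:ℝ) l hS hT hST hla hlb hl2
      have h2 : 0 ≤ l * (2*((((s:ℝ)+(t:ℝ)-2)*l + (2*(s:ℝ)+2*(t:ℝ)-3))^2 - l^2)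
          - ((((s:ℝ)+(t:ℝ)-2)*l + (2*(s:ℝ)+2*(t:ℝ)-3)) * (((s:ℝ)-1)*l + ((s:ℝ)+(t:ℝ)-13/8))
            + l * (((t:ℝ)-1)*l + ((s:ℝ)+(t:ℝ)-13/8)))) :=
        mul_nonneg hlpos.le (by linarith only [h1])
      simp only [hyu0, hyv0, hyp0, hyq0, hyc0, hNA0, hNB0, hE0, hW0, hD0, hP0, hQ0]
      linarith only [hkey, h2]
    · have hpt : ∀ j : Fin (s+t+2), h1Mat s t i j * y j
          = (if (j:ℕ) = 0 then (yu:ℝ) else if (j:ℕ) = 1 then 0 else if (j:ℕ) = 2 then 0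
             else if (j:ℕ) = s+2 then yq else if (j:ℕ) < s+2 then 0 else yc) := by
        intro j
        simp only [hy0]
        exact rowPt1 s t hs ht yu yv yp yq yc i j hi
      have hsum : ∑ j, h1Mat s t i j * y j
          = yu + 0 + 0 + yq + ((s:ℝ)-1)*0 + ((t:ℝ)-1)*yc := by
        rw [Finset.sum_congr rfl (fun j _ => hpt j)]
        rw [Fin.sum_univ_eq_sum_range (fun m => if m = 0 then (yu:ℝ) else if m = 1 then 0
            else if m = 2 then 0 else if m = s+2 then yq else if m < s+2 then 0 else yc)
            (s+t+2)]
        exact sum_shape s t hs ht yu 0 0 yq 0 yc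
      have hyi : y i = yv := by
        simp only [hy0]; rw [if_neg (by omega), if_pos hi]
      rw [hmv, hsum, hyi, hr0, div_mul_eq_mul_div, le_div_iff₀ hlpos]
      have hkey := keyRowU (t:ℝ) (s:ℝ) l hl2'
      simp only [hyu0, hyv0, hyp0, hyq0, hyc0, hNA0, hNB0, hE0, hW0, hD0, hP0, hQ0]
      linarith only [hkey, hP2b]
    · have hpt : ∀ j : Fin (s+t+2), h1Mat s t i j * y j
          = (if (j:ℕ) = 0 then (yu:ℝ) else if (j:ℕ) = 1 then 0 else if (j:ℕ) = 2 then 0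
             else if (j:ℕ) = s+2 then 0 else if (j:ℕ) < s+2 then yc else yc) := by
        intro j
        simp only [hy0]
        exact rowPt2 s t hs ht yu yv yp yq yc i j hi
      have hsum : ∑ j, h1Mat s t i j * y j
          = yu + 0 + 0 + 0 + ((s:ℝ)-1)*yc + ((t:ℝ)-1)*yc := by
        rw [Finset.sum_congr rfl (fun j _ => hpt j)]
        rw [Fin.sum_univ_eq_sum_range (fun m => if m = 0 then (yu:ℝ) else if m = 1 then 0
            else if m = 2 then 0 else if m = s+2 then 0 else if m < s+2 then yc else yc)
            (s+t+2)]
        exact sum_shape s t hs ht yu 0 0 0 yc yc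
      have hyi : y i = yp := by
        simp only [hy0]; rw [if_neg (by omega), if_neg (by omega), if_pos hi]
      rw [hmv, hsum, hyi, hr0, div_mul_eq_mul_div, le_div_iff₀ hlpos]
      have hkey := keyRowU1 (s:ℝ) (t:ℝ) l hl2
      simp only [hyu0, hyv0, hyp0, hyq0, hyc0, hNA0, hNB0, hE0, hW0, hD0, hP0, hQ0]
      linarith only [hkey, hED14, hIIaR, hEposR]
    · have hpt : ∀ j : Fin (s+t+2), h1Mat s t i j * y j
          = (if (j:ℕ) = 0 then (0:ℝ) else if (j:ℕ) = 1 then yv else if (j:ℕ) = 2 then 0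
             else if (j:ℕ) = s+2 then 0 else if (j:ℕ) < s+2 then yc else yc) := by
        intro j
        simp only [hy0]
        exact rowPtS2 s t hs ht yu yv yp yq yc i j hi
      have hsum : ∑ j, h1Mat s t i j * y j
          = 0 + yv + 0 + 0 + ((s:ℝ)-1)*yc + ((t:ℝ)-1)*yc := by
        rw [Finset.sum_congr rfl (fun j _ => hpt j)]
        rw [Fin.sum_univ_eq_sum_range (fun m => if m = 0 then (0:ℝ) else if m = 1 then yv
            else if m = 2 then 0 else if m = s+2 then 0 else if m < s+2 then yc else yc)
            (s+t+2)]
        exact sum_shape s t hs ht 0 yv 0 0 yc yc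
      have hyi : y i = yq := by
        simp only [hy0]; rw [if_neg (by omega), if_neg (by omega), if_neg (by omega), if_pos hi]
      rw [hmv, hsum, hyi, hr0, div_mul_eq_mul_div, le_div_iff₀ hlpos]
      have hkey := keyRowU1 (t:ℝ) (s:ℝ) l hl2'
      simp only [hyu0, hyv0, hyp0, hyq0, hyc0, hNA0, hNB0, hE0, hW0, hD0, hP0, hQ0]
      linarith only [hkey, hED14, hIIbR, hEposR]
    · obtain ⟨hi1, hi2⟩ := hi
      have hpt : ∀ j : Fin (s+t+2), h1Mat s t i j * y j
          = ((if (j:ℕ) = 0 then (yu:ℝ) else if (j:ℕ) = 1 then 0 else if (j:ℕ) = 2 then yp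
             else if (j:ℕ) = s+2 then yq else if (j:ℕ) < s+2 then yc else yc) - (if (j:ℕ) = (i:ℕ) then yc else 0)) := by
        intro j
        simp only [hy0]
        exact rowPtU s t hs ht yu yv yp yq yc i j ⟨hi1, hi2⟩
      have hsum : ∑ j, h1Mat s t i j * y j
          = (yu + 0 + yp + yq + ((s:ℝ)-1)*yc + ((t:ℝ)-1)*yc) - yc := by
        rw [Finset.sum_congr rfl (fun j _ => hpt j)]
        rw [Finset.sum_sub_distrib,
          Fin.sum_univ_eq_sum_range (fun m => if m = 0 then (yu:ℝ) else if m = 1 then 0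
            else if m = 2 then yp else if m = s+2 then yq else if m < s+2 then yc else yc)
            (s+t+2),
          Fin.sum_univ_eq_sum_range (fun m => if m = (i:ℕ) then yc else 0) (s+t+2),
          sum_shape s t hs ht yu 0 yp yq yc yc,
          Finset.sum_ite_eq' (Finset.range (s+t+2)) ((i:ℕ)) (fun _ => yc),
          if_pos (Finset.mem_range.mpr hilt)]
      have hyi : y i = yc := by
        simp only [hy0]; rw [if_neg (by omega), if_neg (by omega), if_neg (by omega), if_neg (by omega)]
      rw [hmv, hsum, hyi, hr0, div_mul_eq_mul_div, le_div_iff₀ hlpos]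
      have hkey := keyRowMid (s:ℝ) (t:ℝ) l hl2
      simp only [hyu0, hyv0, hyp0, hyq0, hyc0, hNA0, hNB0, hE0, hW0, hD0, hP0, hQ0]
      linarith only [hkey, hP2c]
    · obtain ⟨hi1, hi2⟩ := hi
      have hpt : ∀ j : Fin (s+t+2), h1Mat s t i j * y j
          = ((if (j:ℕ) = 0 then (0:ℝ) else if (j:ℕ) = 1 then yv else if (j:ℕ) = 2 then yp
             else if (j:ℕ) = s+2 then yq else if (j:ℕ) < s+2 then yc else yc) - (if (j:ℕ) = (i:ℕ) then yc else 0)) := by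
        intro j
        simp only [hy0]
        exact rowPtV s t hs ht yu yv yp yq yc i j hi1
      have hsum : ∑ j, h1Mat s t i j * y j
          = (0 + yv + yp + yq + ((s:ℝ)-1)*yc + ((t:ℝ)-1)*yc) - yc := by
        rw [Finset.sum_congr rfl (fun j _ => hpt j)]
        rw [Finset.sum_sub_distrib,
          Fin.sum_univ_eq_sum_range (fun m => if m = 0 then (0:ℝ) else if m = 1 then yv
            else if m = 2 then yp else if m = s+2 then yq else if m < s+2 then yc else yc)
            (s+t+2),
          Fin.sum_univ_eq_sum_range (fun m => if m = (i:ℕ) then yc else 0) (s+t+2),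
          sum_shape s t hs ht 0 yv yp yq yc yc,
          Finset.sum_ite_eq' (Finset.range (s+t+2)) ((i:ℕ)) (fun _ => yc),
          if_pos (Finset.mem_range.mpr hilt)]
      have hyi : y i = yc := by
        simp only [hy0]; rw [if_neg (by omega), if_neg (by omega), if_neg (by omega), if_neg (by omega)]
      rw [hmv, hsum, hyi, hr0, div_mul_eq_mul_div, le_div_iff₀ hlpos]
      have hkey := keyRowMid (t:ℝ) (s:ℝ) l hl2'
      simp only [hyu0, hyv0, hyp0, hyq0, hyc0, hNA0, hNB0, hE0, hW0, hD0, hP0, hQ0]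
      linarith only [hkey, hP2d]
  have hle : lam1 (h1Mat s t) ≤ r :=
    lam1_le_bound (by omega) (h1Mat s t) hAnn y hypos r hr hmonster
  have hrl : r < l := by
    rw [hr0, div_lt_iff₀ hlpos]; nlinarith only [hl4]
  exact lt_of_le_of_lt hle hrl
end

section
/- Let n ≥ 7 and let s′, t′ ≥ 1 with s′ + t′ = n − 3. Let H₃^{s′,t′} be the (unsigned) simple graph on n vertices obtained from the underlying graph of Ġ^{s′,t′} together with one additional vertex w, by joining w to all of u₁, …, u_{s′}, v₁, …, v_{t′} (but not to u or v). Then λ₁(H₃^{s′,t′}) < (√(n² − 8) + n − 4)/2, where λ₁ denotes the largest adjacency eigenvalue. -/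
/-!
Collatz–Wielandt bound: if a nonnegative matrix `A` and a positive vector `y` satisfy
`A y < c y` componentwise, every real eigenvalue of `A` is below `c`. For `H₃^{s,t}` take
`y` equal to `a` on `u, v`, to `1` on the clique and to `z` on `w`. With
`m = s + t = n - 3` the bound `c` is the largest root of `c² = (m - 1) c + 2m`, so
`c - m + 1 = 2m / c`, and the four row inequalities reduce to
`max s t / (c - 1) < a`, `m / c < z`, `a + z < 2m / c`, which are compatible because
`max s t ≤ m - 1` and `m < c`.
-/

/-- The adjacency matrix of the unsigned graph `H₃^{s,t}` on `s + t + 3` vertices: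
vertex `0 = u`, vertex `1 = v`, vertices `2, …, s+1` are `u₁, …, u_s`, vertices
`s+2, …, s+t+1` are `v₁, …, v_t`, and vertex `s+t+2 = w`.  It is the underlying graph
of `Ġ^{s,t}` (the clique on `u₁, …, u_s, v₁, …, v_t`, the edge `uv`, the edges `uuᵢ` and
`vvⱼ`) together with the extra vertex `w` joined to all of `u₁, …, u_s, v₁, …, v_t`
(but not to `u` or `v`). -/
def h3Mat (s t : ℕ) : Matrix (Fin (s + t + 3)) (Fin (s + t + 3)) ℝ :=
  Matrix.of fun x y =>
    if x = y then 0
    else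
      if min x.val y.val = 0 ∧ max x.val y.val = 1 then 1
      else if min x.val y.val = 0 then (if max x.val y.val < s + 2 then 1 else 0)
      else if min x.val y.val = 1 then
        (if s + 2 ≤ max x.val y.val ∧ max x.val y.val ≤ s + t + 1 then 1 else 0)
      else 1

open Matrix

section CollatzWielandt

variable {V : Type*} [Fintype V] {A : Matrix V V ℝ} {y : V → ℝ}

theorem eigenvalue_le_of_mulVec_le (hA : ∀ i j, 0 ≤ A i j) (hy : ∀ i, 0 < y i) {b : ℝ}
    (hb : ∀ i, (A *ᵥ y) i ≤ b * y i) {μ : ℝ} {x : V → ℝ} (hx : x ≠ 0)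
    (hμ : A *ᵥ x = μ • x) : μ ≤ b := by
  obtain ⟨j, hj⟩ := Function.ne_iff.mp hx
  have : Nonempty V := ⟨j⟩
  obtain ⟨i, hi⟩ := Finite.exists_max fun k => |x k| / y k
  set r := |x i| / y i
  have hxr : ∀ k, |x k| ≤ r * y k := fun k => (div_le_iff₀ (hy k)).1 (hi k)
  have hr : 0 < r := (div_pos (abs_pos.2 hj) (hy j)).trans_le (hi j)
  have hxi : |x i| = r * y i := (div_mul_cancel₀ _ (hy i).ne').symm
  have key : |μ| * (r * y i) ≤ b * (r * y i) := calc
    |μ| * (r * y i) = |∑ k, A i k * x k| := by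
      rw [← hxi, ← abs_mul, ← smul_eq_mul, ← Pi.smul_apply, ← hμ]; rfl
    _ ≤ ∑ k, A i k * |x k| := by
      simpa only [abs_mul, abs_of_nonneg (hA i _)] using
        Finset.abs_sum_le_sum_abs (fun k => A i k * x k) Finset.univ
    _ ≤ ∑ k, A i k * (r * y k) :=
      Finset.sum_le_sum fun k _ => mul_le_mul_of_nonneg_left (hxr k) (hA i k)
    _ = r * (A *ᵥ y) i := by
      simp only [mulVec, dotProduct, Finset.mul_sum]; exact Finset.sum_congr rfl fun _ _ => by ring
    _ ≤ r * (b * y i) := mul_le_mul_of_nonneg_left (hb i) hr.le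
    _ = b * (r * y i) := by ring
  exact (le_abs_self μ).trans (le_of_mul_le_mul_right key (mul_pos hr (hy i)))

theorem lam1_lt_of_mulVec_lt [Nonempty V] (hA : ∀ i j, 0 ≤ A i j) (hy : ∀ i, 0 < y i) {c : ℝ}
    (hc : ∀ i, (A *ᵥ y) i < c * y i) : lam1 A < c := by
  set b := Finset.univ.sup' Finset.univ_nonempty fun i => (A *ᵥ y) i / y i
  have hb : ∀ i, (A *ᵥ y) i ≤ b * y i := fun i =>
    (div_le_iff₀ (hy i)).1 (Finset.le_sup' (fun i => (A *ᵥ y) i / y i) (Finset.mem_univ i))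
  have hbc : b < c := (Finset.sup'_lt_iff _).2 fun i _ => (div_lt_iff₀ (hy i)).2 (hc i)
  have hb0 : 0 ≤ b := by
    obtain ⟨i⟩ := ‹Nonempty V›
    refine le_of_mul_le_mul_right ?_ (hy i)
    rw [zero_mul]
    exact (Finset.sum_nonneg fun k _ => mul_nonneg (hA i k) (hy k).le).trans (hb i)
  refine (Real.sSup_le ?_ hb0).trans_lt hbc
  rintro μ ⟨x, hx, hμ⟩
  exact eigenvalue_le_of_mulVec_le hA hy hb hx hμ

end CollatzWielandt

section FinSums

variable {N : ℕ}

lemma Fin.sum_ite_val_eq {k : ℕ} (hk : k < N) (c : ℝ) :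
    ∑ j : Fin N, (if j.val = k then c else 0) = c := by
  rw [Fin.sum_univ_eq_sum_range (fun j => if j = k then c else 0), Finset.sum_ite_eq']
  simp [hk]

lemma Fin.sum_ite_val_mem_Ico {lo hi : ℕ} (h : hi ≤ N) :
    ∑ j : Fin N, (if lo ≤ j.val ∧ j.val < hi then (1 : ℝ) else 0) = (hi - lo : ℕ) := by
  rw [Fin.sum_univ_eq_sum_range (fun j => if lo ≤ j ∧ j < hi then (1 : ℝ) else 0),
    Finset.sum_boole]
  have : (Finset.range N).filter (fun j => lo ≤ j ∧ j < hi) = Finset.Ico lo hi := by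
    ext j; simp only [Finset.mem_filter, Finset.mem_range, Finset.mem_Ico]; omega
  rw [this, Nat.card_Ico]

end FinSums

section H3

variable (s t : ℕ) {a z : ℝ}

def h3TestVec (a z : ℝ) : Fin (s + t + 3) → ℝ :=
  fun j => if j.val ≤ 1 then a else if j.val = s + t + 2 then z else 1

lemma h3Mat_nonneg (i j : Fin (s + t + 3)) : 0 ≤ h3Mat s t i j := by
  simp only [h3Mat, of_apply]; split_ifs <;> norm_num

lemma h3TestVec_pos (ha : 0 < a) (hz : 0 < z) (i : Fin (s + t + 3)) : 0 < h3TestVec s t a z i := by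
  simp only [h3TestVec]; split_ifs <;> first | assumption | exact one_pos

lemma h3Mat_mulVec_h3TestVec_u {i : Fin (s + t + 3)} (hi : i.val = 0) :
    (h3Mat s t *ᵥ h3TestVec s t a z) i = a + s := by
  have row : ∀ j : Fin (s + t + 3), h3Mat s t i j * h3TestVec s t a z j =
      (if j.val = 1 then a else 0) + (if 2 ≤ j.val ∧ j.val < s + 2 then 1 else 0) := by
    intro j
    have := j.isLt
    simp only [h3Mat, h3TestVec, of_apply, Fin.ext_iff, hi]
    split_ifs <;> first | ring1 | (exfalso; omega)
  simp only [mulVec, dotProduct, row, Finset.sum_add_distrib,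
    Fin.sum_ite_val_eq (by omega : 1 < s + t + 3),
    Fin.sum_ite_val_mem_Ico (by omega : s + 2 ≤ s + t + 3), Nat.add_sub_cancel]

lemma h3Mat_mulVec_h3TestVec_v {i : Fin (s + t + 3)} (hi : i.val = 1) :
    (h3Mat s t *ᵥ h3TestVec s t a z) i = a + t := by
  have row : ∀ j : Fin (s + t + 3), h3Mat s t i j * h3TestVec s t a z j =
      (if j.val = 0 then a else 0) + (if s + 2 ≤ j.val ∧ j.val < s + t + 2 then 1 else 0) := by
    intro j
    have := j.isLt
    simp only [h3Mat, h3TestVec, of_apply, Fin.ext_iff, hi]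
    split_ifs <;> first | ring1 | (exfalso; omega)
  simp only [mulVec, dotProduct, row, Finset.sum_add_distrib,
    Fin.sum_ite_val_eq (by omega : 0 < s + t + 3),
    Fin.sum_ite_val_mem_Ico (by omega : s + t + 2 ≤ s + t + 3)]
  congr 3; omega

/-- A clique vertex is adjacent to exactly one of `u` (vertex `0`) and `v` (vertex `1`). -/
lemma h3Mat_mulVec_h3TestVec_clique {i : Fin (s + t + 3)} (hi₁ : 2 ≤ i.val)
    (hi₂ : i.val ≤ s + t + 1) :
    (h3Mat s t *ᵥ h3TestVec s t a z) i = a + ((s + t : ℕ) - 1) + z := by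
  have row : ∀ j : Fin (s + t + 3), h3Mat s t i j * h3TestVec s t a z j =
      (if j.val = (if i.val < s + 2 then 0 else 1) then a else 0)
        + ((if 2 ≤ j.val ∧ j.val < s + t + 2 then 1 else 0) - (if j.val = i.val then 1 else 0))
        + (if j.val = s + t + 2 then z else 0) := by
    intro j
    have := j.isLt
    simp only [h3Mat, h3TestVec, of_apply, Fin.ext_iff]
    split_ifs <;> first | ring1 | (exfalso; omega)
  simp only [mulVec, dotProduct, row, Finset.sum_add_distrib, Finset.sum_sub_distrib,
    Fin.sum_ite_val_eq (by split_ifs <;> omega : (if i.val < s + 2 then 0 else 1) < s + t + 3),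
    Fin.sum_ite_val_eq i.isLt, Fin.sum_ite_val_eq (by omega : s + t + 2 < s + t + 3),
    Fin.sum_ite_val_mem_Ico (by omega : s + t + 2 ≤ s + t + 3), Nat.add_sub_cancel]

lemma h3Mat_mulVec_h3TestVec_w {i : Fin (s + t + 3)} (hi : i.val = s + t + 2) :
    (h3Mat s t *ᵥ h3TestVec s t a z) i = (s + t : ℕ) := by
  have row : ∀ j : Fin (s + t + 3), h3Mat s t i j * h3TestVec s t a z j =
      if 2 ≤ j.val ∧ j.val < s + t + 2 then 1 else 0 := by
    intro j
    have := j.isLt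
    simp only [h3Mat, h3TestVec, of_apply, Fin.ext_iff, hi]
    split_ifs <;> first | ring1 | (exfalso; omega)
  simp only [mulVec, dotProduct, row,
    Fin.sum_ite_val_mem_Ico (by omega : s + t + 2 ≤ s + t + 3), Nat.add_sub_cancel]

theorem h3Mat_mulVec_h3TestVec_lt {c : ℝ} (hsa : s < (c - 1) * a) (hta : t < (c - 1) * a)
    (hzc : (s + t : ℕ) < c * z) (hsum : a + z < c - (s + t : ℕ) + 1)
    (i : Fin (s + t + 3)) : (h3Mat s t *ᵥ h3TestVec s t a z) i < c * h3TestVec s t a z i := by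
  have := i.isLt
  rcases (by omega : i.val = 0 ∨ i.val = 1 ∨ (2 ≤ i.val ∧ i.val ≤ s + t + 1) ∨
      i.val = s + t + 2) with hi | hi | ⟨hi₁, hi₂⟩ | hi
  · rw [h3Mat_mulVec_h3TestVec_u s t hi, h3TestVec, if_pos (by omega)]; linarith
  · rw [h3Mat_mulVec_h3TestVec_v s t hi, h3TestVec, if_pos (by omega)]; linarith
  · rw [h3Mat_mulVec_h3TestVec_clique s t hi₁ hi₂, h3TestVec, if_neg (by omega),
      if_neg (by omega)]
    linarith
  · rw [h3Mat_mulVec_h3TestVec_w s t hi, h3TestVec, if_neg (by omega), if_pos hi]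
    exact hzc

end H3

lemma exists_h3_weights {K m c : ℝ} (hK : 0 ≤ K) (hKm : K ≤ m - 1) (hmc : m < c)
    (hc : c ^ 2 = (m - 1) * c + 2 * m) :
    ∃ a z, 0 < a ∧ 0 < z ∧ K < (c - 1) * a ∧ m < c * z ∧ a + z < c - m + 1 := by
  have hc₀ : 0 < c - 1 := by linarith
  have hc₁ : 0 < c := by linarith
  set u := K / (c - 1)
  set r := m / c
  have hu : (c - 1) * u = K := mul_div_cancel₀ _ hc₀.ne'
  have hr : c * r = m := mul_div_cancel₀ _ hc₁.ne'
  have h2r : c - m + 1 = 2 * r := mul_left_cancel₀ hc₁.ne' (by linear_combination hc - 2 * hr)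
  have hur : u < r := by
    rw [div_lt_div_iff₀ hc₀ hc₁]; nlinarith
  refine ⟨u + (r - u) / 3, r + (r - u) / 3, ?_, ?_, ?_, ?_, ?_⟩
  · have : 0 ≤ u := div_nonneg hK hc₀.le
    linarith
  · have : 0 < r := div_pos (by linarith) hc₁
    linarith
  · nlinarith
  · nlinarith
  · linarith

lemma sqrt_bound_sq_eq {n : ℝ} (hn : 3 < n) :
    ((√(n ^ 2 - 8) + n - 4) / 2) ^ 2 = (n - 4) * ((√(n ^ 2 - 8) + n - 4) / 2) + 2 * (n - 3) := by
  have := Real.sq_sqrt (by nlinarith : (0 : ℝ) ≤ n ^ 2 - 8)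
  linear_combination this / 4

lemma sub_three_lt_sqrt_bound {n : ℝ} (hn : 3 < n) : n - 3 < (√(n ^ 2 - 8) + n - 4) / 2 := by
  have : n - 2 < √(n ^ 2 - 8) := Real.lt_sqrt_of_sq_lt (by nlinarith)
  linarith

theorem lam1_h3_lt_general (n s t : ℕ) (hs : 1 ≤ s) (ht : 1 ≤ t)
    (hst : s + t = n - 3) :
    lam1 (h3Mat s t) < (Real.sqrt ((n : ℝ) ^ 2 - 8) + n - 4) / 2 := by
  have hm : ((s + t : ℕ) : ℝ) = n - 3 := by
    rw [eq_sub_iff_add_eq]; exact_mod_cast (by omega : s + t + 3 = n)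
  have hs' : (1 : ℝ) ≤ s := by exact_mod_cast hs
  have ht' : (1 : ℝ) ≤ t := by exact_mod_cast ht
  have hn : (3 : ℝ) < n := by push_cast at hm; linarith
  obtain ⟨a, z, ha, hz, hKa, hzc, hsum⟩ := exists_h3_weights (K := max (s : ℝ) t)
    (m := ((s + t : ℕ) : ℝ)) (c := (√((n : ℝ) ^ 2 - 8) + n - 4) / 2) (by positivity)
    (by push_cast; exact max_le (by linarith) (by linarith))
    (by linarith [sub_three_lt_sqrt_bound hn])
    (by rw [hm]; linear_combination sqrt_bound_sq_eq hn)
  exact lam1_lt_of_mulVec_lt (h3Mat_nonneg s t) (h3TestVec_pos s t ha hz)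
    (h3Mat_mulVec_h3TestVec_lt s t ((le_max_left _ _).trans_lt hKa)
      ((le_max_right _ _).trans_lt hKa) hzc hsum)

theorem lam1_h3_lt (n s t : ℕ) (hn : 7 ≤ n) (hs : 1 ≤ s) (ht : 1 ≤ t)
    (hst : s + t = n - 3) :
    lam1 (h3Mat s t) < (Real.sqrt ((n : ℝ) ^ 2 - 8) + n - 4) / 2 :=
  lam1_h3_lt_general n s t hs ht hst
end

section
/- Let Ġ be a connected unbalanced C₃⁻-free signed graph on n vertices. Then every vertex v of Ġ has degree at most n − 2. -/
/-- The sign of a walk in a signed graph: the product of the signs of its edges. -/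
def walkSign {V : Type*} {G : SimpleGraph V} (σ : V → V → ℤ) {x y : V} (p : G.Walk x y) : ℤ :=
  (p.darts.map fun d => σ d.toProd.1 d.toProd.2).prod

/-- A signed graph is balanced when every cycle has sign `+1`. -/
def SignedBalanced {V : Type*} (G : SimpleGraph V) (σ : V → V → ℤ) : Prop :=
  ∀ (x : V) (c : G.Walk x x), c.IsCycle → walkSign σ c = 1

/-!
A vertex `v` of degree `n - 1` is adjacent to every other vertex. Switching at the
neighbours `w` with `σ v w = -1` makes every edge at `v` positive, and then, since every
other edge `ab` lies in the triangle `vab`, which is positive, every edge becomes positive.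
So `σ` is switching equivalent to the all-positive signature and `Ġ` is balanced.
-/

namespace SignedGraph

variable {V : Type*} {G : SimpleGraph V} {σ : V → V → ℤ}

theorem walkSign_eq_mul_of_forall_adj {τ : V → ℤ} (hτ : ∀ x, τ x * τ x = 1)
    (hστ : ∀ a b, G.Adj a b → σ a b = τ a * τ b) {x y : V} (p : G.Walk x y) :
    walkSign σ p = τ x * τ y := by
  induction p with
  | nil => exact (hτ _).symm
  | @cons u w z h q ih =>
    simp only [walkSign, SimpleGraph.Walk.darts_cons, List.map_cons, List.prod_cons] at ih ⊢
    rw [hστ _ _ h, ih]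
    linear_combination (τ u * τ z) * hτ w

theorem signedBalanced_of_forall_adj_eq_mul {τ : V → ℤ} (hτ : ∀ x, τ x * τ x = 1)
    (hστ : ∀ a b, G.Adj a b → σ a b = τ a * τ b) : SignedBalanced G σ :=
  fun x c _ => (walkSign_eq_mul_of_forall_adj hτ hστ c).trans (hτ x)

theorem eq_mul_of_mul_mul_ne_neg_one {x y z : ℤ} (hx : x = 1 ∨ x = -1) (hy : y = 1 ∨ y = -1)
    (hz : z = 1 ∨ z = -1) (h : x * y * z ≠ -1) : y = x * z := by
  rcases hx with rfl | rfl <;> rcases hy with rfl | rfl <;> rcases hz with rfl | rfl <;>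
    simp_all

theorem signedBalanced_of_isUniversal (hsymm : ∀ x y, σ x y = σ y x)
    (hval : ∀ x y, G.Adj x y → σ x y = 1 ∨ σ x y = -1)
    (hfree : ∀ a b c, G.Adj a b → G.Adj b c → G.Adj a c → σ a b * σ b c * σ a c ≠ -1)
    [DecidableEq V] {v : V} (hv : G.IsUniversal v) : SignedBalanced G σ := by
  let τ : V → ℤ := fun x => if x = v then 1 else σ v x
  have hτ_v : τ v = 1 := if_pos rfl
  have hτ_ne {x : V} (hx : x ≠ v) : τ x = σ v x := if_neg hx
  refine signedBalanced_of_forall_adj_eq_mul (τ := τ) (fun x => ?_) (fun a b hab => ?_)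
  · by_cases hx : x = v
    · simp [hx, hτ_v]
    · rcases hval v x (hv (Ne.symm hx)) with h | h <;> simp [hτ_ne hx, h]
  · by_cases ha : a = v
    · subst ha
      rw [hτ_v, hτ_ne hab.ne', one_mul]
    by_cases hb : b = v
    · subst hb
      rw [hτ_v, hτ_ne ha, mul_one, hsymm]
    have hva := hv (Ne.symm ha)
    have hvb := hv (Ne.symm hb)
    rw [hτ_ne ha, hτ_ne hb]
    exact eq_mul_of_mul_mul_ne_neg_one (hval _ _ hva) (hval _ _ hab) (hval _ _ hvb)
      (hfree v a b hva hab hvb)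

end SignedGraph

theorem degree_le_of_unbalanced_C3minus_free_general {V : Type*} [Fintype V] [DecidableEq V]
    (n : ℕ) (hn : Fintype.card V = n)
    (G : SimpleGraph V) [DecidableRel G.Adj] (σ : V → V → ℤ)
    (hsymm : ∀ x y, σ x y = σ y x)
    (hval : ∀ x y, G.Adj x y → σ x y = 1 ∨ σ x y = -1)
    (hunbal : ¬ SignedBalanced G σ)
    (hfree : ∀ a b c, G.Adj a b → G.Adj b c → G.Adj a c → σ a b * σ b c * σ a c ≠ -1) :
    ∀ v : V, G.degree v ≤ n - 2 := by
  intro v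
  have hv : ¬ G.IsUniversal v := fun hv =>
    hunbal (SignedGraph.signedBalanced_of_isUniversal hsymm hval hfree hv)
  have hdeg : G.degree v < Fintype.card V - 1 := (G.degree_lt_card_sub_one v).2 hv
  omega

theorem degree_le_of_unbalanced_C3minus_free {V : Type*} [Fintype V] [DecidableEq V]
    (n : ℕ) (hn : Fintype.card V = n)
    (G : SimpleGraph V) [DecidableRel G.Adj] (σ : V → V → ℤ)
    (hsymm : ∀ x y, σ x y = σ y x)
    (hval : ∀ x y, G.Adj x y → σ x y = 1 ∨ σ x y = -1)
    (hzero : ∀ x y, ¬ G.Adj x y → σ x y = 0)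
    (hconn : G.Connected)
    (hunbal : ¬ SignedBalanced G σ)
    (hfree : ∀ a b c, G.Adj a b → G.Adj b c → G.Adj a c → σ a b * σ b c * σ a c ≠ -1) :
    ∀ v : V, G.degree v ≤ n - 2 :=
  degree_le_of_unbalanced_C3minus_free_general n hn G σ hsymm hval hunbal hfree
end
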